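/- arXiv:2404.05877 — 6 statements merged into one kernel-verified Lean document; each statement's English description precedes it below -/
import Mathlib

section
/- Let (X,𝓑,μ) be a σ-finite measure space, E a Banach space, and T : L¹(X,μ;E) → L¹(X,μ;E) a bounded linear spaCb operator. Let (δ_n)_{n≥1} be a sequence of positive reals with lim_{n→∞} δ_n = 0. Then for every f ∈ L¹(X,μ;E) that is ergodic with respect to T, for μ-a.e. x ∈ X one has lim_{N→∞} sup_{(c_n)_{n=1}^N ∈ 𝓘(N,δ_N)} ‖(1/N)·Σ_{n=1}^N (Tⁿf)(x)·c_n‖ = 0. -/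
open MeasureTheory Filter Topology Metric

noncomputable section

/-- `T` is pointwise absolutely Cesàro bounded with constant `C`. -/
def IsPaCbWith {X : Type*} [MeasurableSpace X] {E : Type*} [NormedAddCommGroup E]
    [NormedSpace ℂ E] (μ : Measure X) (T : Lp E 1 μ →L[ℂ] Lp E 1 μ) (C : ℝ) : Prop :=
  ∀ f : Lp E 1 μ, ∀ᵐ x ∂μ,
    Filter.limsup (fun N : ℕ =>
        ENNReal.ofReal ((N : ℝ)⁻¹ * ∑ n ∈ Finset.Icc 1 N, ‖((T ^ n) f) x‖)) atTop
      ≤ ENNReal.ofReal (C * ∫ y, ‖f y‖ ∂μ)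

/-- `T` is strongly pointwise absolutely Cesàro bounded with constant `C`. -/
def IsSpaCbWith {X : Type*} [MeasurableSpace X] {E : Type*} [NormedAddCommGroup E]
    [NormedSpace ℂ E] (μ : Measure X) (T : Lp E 1 μ →L[ℂ] Lp E 1 μ) (C : ℝ) : Prop :=
  IsPaCbWith μ T C ∧
    ∀ f : Lp E 1 μ, eLpNorm (⇑f) ⊤ μ ≠ ⊤ → ∀ n : ℕ,
      eLpNorm (⇑((T ^ n) f)) ⊤ μ ≤ ENNReal.ofReal C * eLpNorm (⇑f) ⊤ μ

/-- `T` is strongly pointwise absolutely Cesàro bounded. -/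
def IsSpaCb {X : Type*} [MeasurableSpace X] {E : Type*} [NormedAddCommGroup E]
    [NormedSpace ℂ E] (μ : Measure X) (T : Lp E 1 μ →L[ℂ] Lp E 1 μ) : Prop :=
  ∃ C > 0, IsSpaCbWith μ T C

/-- The set `𝓘(N,δ)` of tuples `(c_n)_{n=1}^N` in the closed unit disc with
`(1/N) ∑_{n=1}^{N-1} |c_n - c_{n+1}| < δ`. -/
def MemI (N : ℕ) (δ : ℝ) (c : ℕ → ℂ) : Prop :=
  (∀ n ∈ Finset.Icc 1 N, ‖c n‖ ≤ 1) ∧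
    (N : ℝ)⁻¹ * ∑ n ∈ Finset.Icc 1 (N - 1), ‖c n - c (n + 1)‖ < δ

open scoped ENNReal NNReal

set_option maxHeartbeats 1000000

lemma memI_zero {N : ℕ} {δ : ℝ} (hδ : 0 < δ) : MemI N δ (fun _ => 0) := by
  constructor
  · intro n _; simp
  · simpa using hδ
lemma abel_sum {E : Type*} [AddCommGroup E] [Module ℂ E] (c : ℕ → ℂ) (b : ℕ → E) (M : ℕ) :
    ∑ n ∈ Finset.Icc 1 (M + 1), c n • (b n - b (n + 1))
      = c 1 • b 1 - c (M + 1) • b (M + 2)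
        + ∑ n ∈ Finset.Icc 1 M, (c (n + 1) - c n) • b (n + 1) := by
  induction M with
  | zero => simp [smul_sub]
  | succ M ih =>
      rw [Finset.sum_Icc_succ_top (by omega) (fun n => c n • (b n - b (n + 1))), ih,
        Finset.sum_Icc_succ_top (by omega) (fun n => (c (n + 1) - c n) • b (n + 1))]
      module

lemma tendsto_sup_of_bounded
    {X : Type*} [MeasurableSpace X] {E : Type*} [NormedAddCommGroup E] [NormedSpace ℂ E]
    {μ : Measure X} {T : Lp E 1 μ →L[ℂ] Lp E 1 μ} {C : ℝ}
    (hT2 : ∀ g : Lp E 1 μ, eLpNorm (⇑g) ⊤ μ ≠ ⊤ → ∀ n : ℕ,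
      eLpNorm (⇑((T ^ n) g)) ⊤ μ ≤ ENNReal.ofReal C * eLpNorm (⇑g) ⊤ μ)
    (δ : ℕ → ℝ) (hδpos : ∀ n, 0 < δ n) (hδ : Tendsto δ atTop (𝓝 0))
    (u : Lp E 1 μ) (hu : eLpNorm (⇑u) ⊤ μ ≠ ⊤) :
    ∀ᵐ x ∂μ, Tendsto (fun N : ℕ =>
        ⨆ c : {c : ℕ → ℂ // MemI N (δ N) c},
          (N : ℝ)⁻¹ * ‖∑ n ∈ Finset.Icc 1 N, c.1 n • ((T ^ n) (u - T u)) x‖)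
      atTop (𝓝 0) := by
  set K : ENNReal := ENNReal.ofReal C * eLpNorm (⇑u) ⊤ μ with hKdef
  have hK : K ≠ ⊤ := ENNReal.mul_ne_top ENNReal.ofReal_ne_top hu
  set B : ℝ := K.toReal with hBdef
  have hB0 : 0 ≤ B := ENNReal.toReal_nonneg
  have h1 : ∀ n : ℕ, ∀ᵐ x ∂μ, ‖((T ^ n) u) x‖ ≤ B := by
    intro n
    filter_upwards [enorm_ae_le_eLpNormEssSup (⇑((T ^ n) u)) μ] with x hx
    have h2 : (‖((T ^ n) u) x‖₊ : ℝ≥0∞) ≤ K := by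
      refine hx.trans ?_
      rw [← eLpNorm_exponent_top]
      exact hT2 u hu n
    have := ENNReal.toReal_mono hK h2
    simpa using this
  have h2 : ∀ n : ℕ, ∀ᵐ x ∂μ,
      ((T ^ n) (u - T u)) x = ((T ^ n) u) x - ((T ^ (n + 1)) u) x := by
    intro n
    have he : (T ^ n) (u - T u) = (T ^ n) u - (T ^ (n + 1)) u := by
      rw [map_sub, pow_succ, ContinuousLinearMap.mul_apply]
    rw [he]
    filter_upwards [Lp.coeFn_sub ((T ^ n) u) ((T ^ (n + 1)) u)] with x hx
    simpa using hx
  filter_upwards [ae_all_iff.2 h1, ae_all_iff.2 h2] with x hx1 hx2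
  have key : ∀ N : ℕ,
      (⨆ c : {c : ℕ → ℂ // MemI N (δ N) c},
          (N : ℝ)⁻¹ * ‖∑ n ∈ Finset.Icc 1 N, c.1 n • ((T ^ n) (u - T u)) x‖)
        ≤ B * (2 * (N : ℝ)⁻¹ + δ N) := by
    intro N
    haveI : Nonempty {c : ℕ → ℂ // MemI N (δ N) c} := ⟨⟨fun _ => 0, memI_zero (hδpos N)⟩⟩
    refine ciSup_le fun c => ?_
    obtain ⟨c, hc1, hc2⟩ := c
    match N with
    | 0 =>
        simp only [Nat.cast_zero, inv_zero, zero_mul, Finset.Icc_self]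
        have : (0:ℝ) ≤ B * (2 * ((0:ℕ) : ℝ)⁻¹ + δ 0) := by
          have := (hδpos 0).le
          positivity
        simpa using this
    | (M + 1) =>
        have hsum : ∑ n ∈ Finset.Icc 1 (M + 1), c n • ((T ^ n) (u - T u)) x
            = ∑ n ∈ Finset.Icc 1 (M + 1), c n • (((T ^ n) u) x - ((T ^ (n + 1)) u) x) := by
          refine Finset.sum_congr rfl fun n _ => ?_
          rw [hx2 n]
        rw [hsum, abel_sum c (fun n => ((T ^ n) u) x) M]
        -- bound the norm
        have hnorm : ‖c 1 • ((T ^ 1) u) x - c (M + 1) • ((T ^ (M + 2)) u) x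
              + ∑ n ∈ Finset.Icc 1 M, (c (n + 1) - c n) • ((T ^ (n + 1)) u) x‖
            ≤ B + B + (∑ n ∈ Finset.Icc 1 M, ‖c n - c (n + 1)‖) * B := by
          have hterm : ‖∑ n ∈ Finset.Icc 1 M, (c (n + 1) - c n) • ((T ^ (n + 1)) u) x‖
              ≤ (∑ n ∈ Finset.Icc 1 M, ‖c n - c (n + 1)‖) * B := by
            calc ‖∑ n ∈ Finset.Icc 1 M, (c (n + 1) - c n) • ((T ^ (n + 1)) u) x‖
                ≤ ∑ n ∈ Finset.Icc 1 M, ‖(c (n + 1) - c n) • ((T ^ (n + 1)) u) x‖ :=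
                  norm_sum_le _ _
              _ ≤ ∑ n ∈ Finset.Icc 1 M, ‖c n - c (n + 1)‖ * B := by
                  refine Finset.sum_le_sum fun n _ => ?_
                  rw [norm_smul, norm_sub_rev]
                  exact mul_le_mul_of_nonneg_left (hx1 _) (norm_nonneg _)
              _ = (∑ n ∈ Finset.Icc 1 M, ‖c n - c (n + 1)‖) * B := by
                  rw [Finset.sum_mul]
          have hA : ‖c 1 • ((T ^ 1) u) x‖ ≤ B := by
            rw [norm_smul]
            calc ‖c 1‖ * ‖((T ^ 1) u) x‖ ≤ 1 * B :=
                mul_le_mul (hc1 1 (by simp)) (hx1 1) (norm_nonneg _) zero_le_one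
              _ = B := one_mul B
          have hA2 : ‖c (M + 1) • ((T ^ (M + 2)) u) x‖ ≤ B := by
            rw [norm_smul]
            calc ‖c (M + 1)‖ * ‖((T ^ (M + 2)) u) x‖ ≤ 1 * B :=
                mul_le_mul (hc1 (M + 1) (by simp)) (hx1 (M + 2)) (norm_nonneg _) zero_le_one
              _ = B := one_mul B
          calc ‖c 1 • ((T ^ 1) u) x - c (M + 1) • ((T ^ (M + 2)) u) x
                + ∑ n ∈ Finset.Icc 1 M, (c (n + 1) - c n) • ((T ^ (n + 1)) u) x‖
              ≤ ‖c 1 • ((T ^ 1) u) x - c (M + 1) • ((T ^ (M + 2)) u) x‖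
                + ‖∑ n ∈ Finset.Icc 1 M, (c (n + 1) - c n) • ((T ^ (n + 1)) u) x‖ :=
                norm_add_le _ _
            _ ≤ (‖c 1 • ((T ^ 1) u) x‖ + ‖c (M + 1) • ((T ^ (M + 2)) u) x‖)
                + ‖∑ n ∈ Finset.Icc 1 M, (c (n + 1) - c n) • ((T ^ (n + 1)) u) x‖ := by
                gcongr
                exact norm_sub_le _ _
            _ ≤ B + B + (∑ n ∈ Finset.Icc 1 M, ‖c n - c (n + 1)‖) * B := by
                exact add_le_add (add_le_add hA hA2) hterm
        have hS : ((M + 1 : ℕ) : ℝ)⁻¹ * ∑ n ∈ Finset.Icc 1 M, ‖c n - c (n + 1)‖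
            < δ (M + 1) := by
          simpa using hc2
        have hS0 : (0:ℝ) ≤ ∑ n ∈ Finset.Icc 1 M, ‖c n - c (n + 1)‖ :=
          Finset.sum_nonneg fun n _ => norm_nonneg _
        have hNinv : (0:ℝ) ≤ ((M + 1 : ℕ) : ℝ)⁻¹ := by positivity
        calc ((M + 1 : ℕ) : ℝ)⁻¹ * ‖c 1 • ((T ^ 1) u) x - c (M + 1) • ((T ^ (M + 2)) u) x
              + ∑ n ∈ Finset.Icc 1 M, (c (n + 1) - c n) • ((T ^ (n + 1)) u) x‖
            ≤ ((M + 1 : ℕ) : ℝ)⁻¹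
              * (B + B + (∑ n ∈ Finset.Icc 1 M, ‖c n - c (n + 1)‖) * B) :=
              mul_le_mul_of_nonneg_left hnorm hNinv
          _ ≤ B * (2 * ((M + 1 : ℕ) : ℝ)⁻¹ + δ (M + 1)) := by
              have h3 := mul_le_mul_of_nonneg_left hS.le hB0
              nlinarith [h3, hNinv, hB0]
  refine squeeze_zero (fun N => Real.iSup_nonneg fun c => by positivity) key ?_
  have : Tendsto (fun N : ℕ => 2 * (N : ℝ)⁻¹ + δ N) atTop (𝓝 (2 * 0 + 0)) := by
    exact ((tendsto_inv_atTop_zero.comp tendsto_natCast_atTop_atTop).const_mul 2).add hδ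
  simpa using this.const_mul B

lemma exists_bounded_approx
    {X : Type*} [MeasurableSpace X] {E : Type*} [NormedAddCommGroup E] [NormedSpace ℂ E]
    {μ : Measure X} (T : Lp E 1 μ →L[ℂ] Lp E 1 μ)
    (f : Lp E 1 μ)
    (hf : ∀ g' : Lp E 1 μ →L[ℂ] ℂ,
      Tendsto (fun N : ℕ => (N : ℂ)⁻¹ * ∑ n ∈ Finset.Icc 1 N, g' ((T ^ n) f))
        atTop (𝓝 0))
    (ε : ℝ) (hε : 0 < ε) :
    ∃ u : Lp E 1 μ, eLpNorm (⇑u) ⊤ μ ≠ ⊤ ∧ ‖f - (u - T u)‖ < ε := by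
  set M : Submodule ℂ (Lp E 1 μ) := LinearMap.range ((1 - T : Lp E 1 μ →L[ℂ] Lp E 1 μ) : Lp E 1 μ →ₗ[ℂ] Lp E 1 μ) with hMdef
  -- Step 1: f is in the closure of M
  have hmem : f ∈ closure (M : Set (Lp E 1 μ)) := by
    by_contra h
    have hconv : Convex ℝ (closure (M : Set (Lp E 1 μ))) := by
      have : Convex ℝ (M : Set (Lp E 1 μ)) := by
        have := (M.restrictScalars ℝ).convex
        simpa using this
      exact this.closure
    obtain ⟨g', r, hlt, hr⟩ :=
      RCLike.geometric_hahn_banach_closed_point (𝕜 := ℂ) hconv isClosed_closure h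
    -- g' vanishes on M
    have hvanish : ∀ a ∈ M, g' a = 0 := by
      intro a ha
      by_contra hne
      have hnsq : 0 < Complex.normSq (g' a) := Complex.normSq_pos.2 hne
      have hkey : ∀ s : ℝ, s * Complex.normSq (g' a) < r := by
        intro s
        have hmem' : ((s : ℂ) * (starRingEnd ℂ) (g' a)) • a ∈ M := M.smul_mem _ ha
        have := hlt _ (subset_closure hmem')
        rw [_root_.map_smul] at this
        have heq : ((s : ℂ) * (starRingEnd ℂ) (g' a)) • g' a
            = (s : ℂ) * (Complex.normSq (g' a) : ℂ) := by
          rw [smul_eq_mul]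
          rw [mul_assoc]
          congr 1
          rw [mul_comm, Complex.mul_conj]
        rw [heq] at this
        simpa using this
      have := hkey ((r + 1) / Complex.normSq (g' a))
      rw [div_mul_cancel₀ _ (ne_of_gt hnsq)] at this
      linarith
    have hvanish' : ∀ a ∈ closure (M : Set (Lp E 1 μ)), g' a = 0 := by
      intro a ha
      have hsub : closure (M : Set (Lp E 1 μ)) ⊆ g' ⁻¹' {0} := by
        apply closure_minimal _ (isClosed_singleton.preimage g'.continuous)
        intro a ha; exact hvanish a ha
      simpa using hsub ha
    -- f - T^n f ∈ M
    have hmemM : ∀ n : ℕ, f - (T ^ n) f ∈ M := by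
      intro n
      induction n with
      | zero => simp
      | succ n ih =>
          have : f - (T ^ (n + 1)) f = (f - (T ^ n) f) + (1 - T) ((T ^ n) f) := by
            rw [pow_succ']
            simp [ContinuousLinearMap.sub_apply, ContinuousLinearMap.mul_apply]
          rw [this]
          exact M.add_mem ih (LinearMap.mem_range_self _ _)
    have hginv : ∀ n : ℕ, g' ((T ^ n) f) = g' f := by
      intro n
      have := hvanish _ (hmemM n)
      rw [map_sub] at this
      exact (sub_eq_zero.mp this).symm
    have heval : (fun N : ℕ => (N : ℂ)⁻¹ * ∑ n ∈ Finset.Icc 1 N, g' ((T ^ n) f))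
        =ᶠ[atTop] fun _ => g' f := by
      filter_upwards [eventually_ge_atTop 1] with N hN
      have hsum : ∑ n ∈ Finset.Icc 1 N, g' ((T ^ n) f) = (N : ℂ) * g' f := by
        rw [Finset.sum_congr rfl fun n _ => hginv n, Finset.sum_const, Nat.card_Icc]
        simp
      have hN0 : (N : ℂ) ≠ 0 := Nat.cast_ne_zero.mpr (by omega)
      rw [hsum, ← mul_assoc, inv_mul_cancel₀ hN0, one_mul]
    have h0 : g' f = 0 := tendsto_nhds_unique (tendsto_const_nhds.congr' heval.symm) (hf g')
    have h00 := hlt 0 (subset_closure M.zero_mem)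
    rw [h0] at hr
    simp only [map_zero] at h00 hr
    linarith
  -- Step 2: extract a bounded approximant
  rw [Metric.mem_closure_iff] at hmem
  have hT1 : (0:ℝ) < 1 + ‖T‖ := by positivity
  obtain ⟨w, hwM, hw⟩ := hmem (ε/2) (by linarith)
  have hwM' : w ∈ M := hwM
  rw [hMdef, LinearMap.mem_range] at hwM'
  obtain ⟨v, hv⟩ := hwM'
  have hdr := Lp.simpleFunc.denseRange (E := E) (μ := μ) (p := 1) (by norm_num)
  obtain ⟨s, hs⟩ := Metric.denseRange_iff.mp hdr v (ε / (2 * (1 + ‖T‖))) (by positivity)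
  set u : Lp E 1 μ := (s : Lp E 1 μ) with hudef
  refine ⟨u, ?_, ?_⟩
  · obtain ⟨Cb, hCb⟩ := (Lp.simpleFunc.toSimpleFunc s).exists_forall_norm_le
    have hae : eLpNorm (⇑u) ⊤ μ = eLpNorm (⇑(Lp.simpleFunc.toSimpleFunc s)) ⊤ μ :=
      eLpNorm_congr_ae (Lp.simpleFunc.toSimpleFunc_eq_toFun s).symm
    rw [hae, eLpNorm_exponent_top]
    exact (eLpNormEssSup_lt_top_of_ae_bound (ae_of_all μ hCb)).ne
  · have hsplit : f - (u - T u) = (f - w) + (w - (u - T u)) := by abel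
    have hw2 : w - (u - T u) = (v - u) - T (v - u) := by
      rw [← hv]
      simp only [ContinuousLinearMap.coe_coe, ContinuousLinearMap.sub_apply, ContinuousLinearMap.one_apply, map_sub]
      abel
    have hdist : ‖v - u‖ < ε / (2 * (1 + ‖T‖)) := by
      rw [← dist_eq_norm]
      exact hs
    have hb : ‖(v - u) - T (v - u)‖ ≤ (1 + ‖T‖) * ‖v - u‖ := by
      calc ‖(v - u) - T (v - u)‖ ≤ ‖v - u‖ + ‖T (v - u)‖ := norm_sub_le _ _
        _ ≤ ‖v - u‖ + ‖T‖ * ‖v - u‖ := by gcongr; exact T.le_opNorm _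
        _ = (1 + ‖T‖) * ‖v - u‖ := by ring
    have heq2 : (1 + ‖T‖) * (ε / (2 * (1 + ‖T‖))) = ε / 2 := by
      field_simp
    have hfw : ‖f - w‖ < ε / 2 := by
      rw [← dist_eq_norm]
      exact hw
    calc ‖f - (u - T u)‖ = ‖(f - w) + (w - (u - T u))‖ := by rw [hsplit]
      _ ≤ ‖f - w‖ + ‖w - (u - T u)‖ := norm_add_le _ _
      _ ≤ ‖f - w‖ + (1 + ‖T‖) * ‖v - u‖ := by rw [hw2]; gcongr
      _ < ε / 2 + (1 + ‖T‖) * (ε / (2 * (1 + ‖T‖))) := by gcongr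
      _ = ε := by rw [heq2]; ring


/-- **Uniform pointwise ergodic theorem for ergodic elements with respect to spaCb operators.**
If `T` is a bounded linear spaCb operator on `L¹(X,μ;E)` (`μ` σ-finite, `E` Banach),
`(δ_n) ⊆ ℝ⁺` tends to `0`, and `f ∈ L¹(X,μ;E)` is ergodic with respect to `T`, then for a.e.
`x ∈ X` we have `lim_N sup_{(c_n) ∈ 𝓘(N,δ_N)} ‖(1/N) ∑_{n=1}^N c_n (Tⁿf)(x)‖ = 0`. -/
theorem uniform_pointwise_ergodic_theorem
    {X : Type*} [MeasurableSpace X] {E : Type*} [NormedAddCommGroup E] [NormedSpace ℂ E]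
    [CompleteSpace E] (μ : Measure X) [SigmaFinite μ]
    (T : Lp E 1 μ →L[ℂ] Lp E 1 μ) (hT : IsSpaCb μ T)
    (δ : ℕ → ℝ) (hδpos : ∀ n, 0 < δ n) (hδ : Tendsto δ atTop (𝓝 0))
    (f : Lp E 1 μ)
    (hf : ∀ g' : Lp E 1 μ →L[ℂ] ℂ,
      Tendsto (fun N : ℕ => (N : ℂ)⁻¹ * ∑ n ∈ Finset.Icc 1 N, g' ((T ^ n) f))
        atTop (𝓝 0)) :
    ∀ᵐ x ∂μ, Tendsto (fun N : ℕ =>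
        ⨆ c : {c : ℕ → ℂ // MemI N (δ N) c},
          (N : ℝ)⁻¹ * ‖∑ n ∈ Finset.Icc 1 N, c.1 n • ((T ^ n) f) x‖)
      atTop (𝓝 0) := by
  obtain ⟨C, hC, hpa, hbdd⟩ := hT
  have hdense : ∀ k : ℕ, ∃ u : Lp E 1 μ,
      eLpNorm (⇑u) ⊤ μ ≠ ⊤ ∧ ‖f - (u - T u)‖ < 1 / (k + 1) := fun k =>
    exists_bounded_approx T f hf (1 / (k + 1)) (by positivity)
  choose u hub hua using hdense
  set g : ℕ → Lp E 1 μ := fun k => u k - T (u k) with hgdef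
  have A : ∀ k : ℕ, ∀ᵐ x ∂μ, Tendsto (fun N : ℕ =>
      ⨆ c : {c : ℕ → ℂ // MemI N (δ N) c},
        (N : ℝ)⁻¹ * ‖∑ n ∈ Finset.Icc 1 N, c.1 n • ((T ^ n) (g k)) x‖)
      atTop (𝓝 0) := fun k => tendsto_sup_of_bounded hbdd δ hδpos hδ (u k) (hub k)
  have P : ∀ k : ℕ, ∀ᵐ x ∂μ,
      Filter.limsup (fun N : ℕ =>
        ENNReal.ofReal ((N : ℝ)⁻¹ * ∑ n ∈ Finset.Icc 1 N, ‖((T ^ n) (f - g k)) x‖)) atTop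
        ≤ ENNReal.ofReal (C * ∫ y, ‖(f - g k) y‖ ∂μ) := fun k => hpa (f - g k)
  have Bk : ∀ k n : ℕ, ∀ᵐ x ∂μ,
      ((T ^ n) f) x = ((T ^ n) (g k)) x + ((T ^ n) (f - g k)) x := by
    intro k n
    have he : (T ^ n) f = (T ^ n) (g k) + (T ^ n) (f - g k) := by
      rw [map_sub (T ^ n) f (g k)]; abel
    rw [he]
    filter_upwards [Lp.coeFn_add ((T ^ n) (g k)) ((T ^ n) (f - g k))] with x hx
    simpa using hx
  have hnorm_int : ∀ k : ℕ, C * ∫ y, ‖(f - g k) y‖ ∂μ ≤ C * (1 / (k + 1)) := by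
    intro k
    have hi : ∫ y, ‖(f - g k) y‖ ∂μ = ‖f - g k‖ := (L1.norm_eq_integral_norm _).symm
    rw [hi]
    exact mul_le_mul_of_nonneg_left (hua k).le hC.le
  filter_upwards [ae_all_iff.2 A, ae_all_iff.2 P,
    ae_all_iff.2 (fun k => ae_all_iff.2 (Bk k))] with x hxA hxP hxB
  rw [NormedAddCommGroup.tendsto_nhds_zero]
  intro ε hε
  obtain ⟨k0, hk0⟩ := exists_nat_gt (4 * C / ε)
  set k := k0 with hkdef
  have hk4 : C * (1 / ((k : ℝ) + 1)) < ε / 4 := by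
    have hk1 : (0:ℝ) < (k : ℝ) + 1 := by positivity
    rw [mul_one_div, div_lt_div_iff₀ hk1 (by norm_num : (0:ℝ) < 4)]
    have h4 : 4 * C / ε < (k : ℝ) := hk0
    rw [div_lt_iff₀ hε] at h4
    nlinarith
  have h1 : ∀ᶠ N in atTop, (⨆ c : {c : ℕ → ℂ // MemI N (δ N) c},
      (N : ℝ)⁻¹ * ‖∑ n ∈ Finset.Icc 1 N, c.1 n • ((T ^ n) (g k)) x‖) < ε / 2 :=
    (hxA k).eventually_lt_const (by linarith)
  have h2 : ∀ᶠ N : ℕ in atTop,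
      (N : ℝ)⁻¹ * ∑ n ∈ Finset.Icc 1 N, ‖((T ^ n) (f - g k)) x‖ < ε / 2 := by
    have hlt : Filter.limsup (fun N : ℕ =>
        ENNReal.ofReal ((N : ℝ)⁻¹ * ∑ n ∈ Finset.Icc 1 N, ‖((T ^ n) (f - g k)) x‖)) atTop
        < ENNReal.ofReal (ε / 2) := by
      refine lt_of_le_of_lt (hxP k) ?_
      refine lt_of_le_of_lt (ENNReal.ofReal_le_ofReal (hnorm_int k)) ?_
      exact (ENNReal.ofReal_lt_ofReal_iff (by linarith)).2 (by linarith)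
    filter_upwards [Filter.eventually_lt_of_limsup_lt hlt] with N hN
    have h0 : (0:ℝ) ≤ (N : ℝ)⁻¹ * ∑ n ∈ Finset.Icc 1 N, ‖((T ^ n) (f - g k)) x‖ := by
      positivity
    exact (ENNReal.ofReal_lt_ofReal_iff_of_nonneg h0).1 hN
  filter_upwards [h1, h2] with N hN1 hN2
  haveI hne : Nonempty {c : ℕ → ℂ // MemI N (δ N) c} :=
    ⟨⟨fun _ => 0, memI_zero (hδpos N)⟩⟩
  have hcomp : (⨆ c : {c : ℕ → ℂ // MemI N (δ N) c},
      (N : ℝ)⁻¹ * ‖∑ n ∈ Finset.Icc 1 N, c.1 n • ((T ^ n) f) x‖)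
      ≤ (⨆ c : {c : ℕ → ℂ // MemI N (δ N) c},
          (N : ℝ)⁻¹ * ‖∑ n ∈ Finset.Icc 1 N, c.1 n • ((T ^ n) (g k)) x‖)
        + (N : ℝ)⁻¹ * ∑ n ∈ Finset.Icc 1 N, ‖((T ^ n) (f - g k)) x‖ := by
    refine ciSup_le fun c => ?_
    obtain ⟨c, hc1, hc2⟩ := c
    have hsum : ∑ n ∈ Finset.Icc 1 N, c n • ((T ^ n) f) x
        = (∑ n ∈ Finset.Icc 1 N, c n • ((T ^ n) (g k)) x)
          + ∑ n ∈ Finset.Icc 1 N, c n • ((T ^ n) (f - g k)) x := by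
      rw [← Finset.sum_add_distrib]
      refine Finset.sum_congr rfl fun n _ => ?_
      rw [hxB k n, smul_add]
    have hD : ‖∑ n ∈ Finset.Icc 1 N, c n • ((T ^ n) (f - g k)) x‖
        ≤ ∑ n ∈ Finset.Icc 1 N, ‖((T ^ n) (f - g k)) x‖ := by
      refine (norm_sum_le _ _).trans (Finset.sum_le_sum fun n hn => ?_)
      rw [norm_smul]
      calc ‖c n‖ * ‖((T ^ n) (f - g k)) x‖ ≤ 1 * ‖((T ^ n) (f - g k)) x‖ := by
            gcongr
            exact hc1 n hn
        _ = ‖((T ^ n) (f - g k)) x‖ := one_mul _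
    have hbdd2 : BddAbove (Set.range fun c : {c : ℕ → ℂ // MemI N (δ N) c} =>
        (N : ℝ)⁻¹ * ‖∑ n ∈ Finset.Icc 1 N, c.1 n • ((T ^ n) (g k)) x‖) := by
      refine ⟨(N : ℝ)⁻¹ * ∑ n ∈ Finset.Icc 1 N, ‖((T ^ n) (g k)) x‖, ?_⟩
      rintro _ ⟨⟨c', hc'⟩, rfl⟩
      refine mul_le_mul_of_nonneg_left ?_ (by positivity)
      refine (norm_sum_le _ _).trans (Finset.sum_le_sum fun n hn => ?_)
      rw [norm_smul]
      calc ‖c' n‖ * ‖((T ^ n) (g k)) x‖ ≤ 1 * ‖((T ^ n) (g k)) x‖ := by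
            gcongr
            exact hc'.1 n hn
        _ = ‖((T ^ n) (g k)) x‖ := one_mul _
    have hmain : (N : ℝ)⁻¹ * ‖∑ n ∈ Finset.Icc 1 N, c n • ((T ^ n) f) x‖
        ≤ (N : ℝ)⁻¹ * ‖∑ n ∈ Finset.Icc 1 N, c n • ((T ^ n) (g k)) x‖
          + (N : ℝ)⁻¹ * ∑ n ∈ Finset.Icc 1 N, ‖((T ^ n) (f - g k)) x‖ := by
      rw [← mul_add]
      refine mul_le_mul_of_nonneg_left ?_ (by positivity)
      rw [hsum]
      exact (norm_add_le _ _).trans (add_le_add le_rfl hD)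
    refine hmain.trans (add_le_add ?_ le_rfl)
    exact le_ciSup hbdd2 ⟨c, hc1, hc2⟩
  have hnn : (0:ℝ) ≤ ⨆ c : {c : ℕ → ℂ // MemI N (δ N) c},
      (N : ℝ)⁻¹ * ‖∑ n ∈ Finset.Icc 1 N, c.1 n • ((T ^ n) f) x‖ :=
    Real.iSup_nonneg fun c => by positivity
  rw [Real.norm_of_nonneg hnn]
  calc (⨆ c : {c : ℕ → ℂ // MemI N (δ N) c},
      (N : ℝ)⁻¹ * ‖∑ n ∈ Finset.Icc 1 N, c.1 n • ((T ^ n) f) x‖)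
      ≤ _ := hcomp
    _ < ε / 2 + ε / 2 := by
        have := add_lt_add hN1 hN2
        linarith [hN1, hN2]
    _ = ε := by ring
end
end

section
/- Let (X,𝓑,μ) be a σ-finite measure space, E a Banach space, and T : L¹(X,μ;E) → L¹(X,μ;E) a bounded linear spaCb operator. Let (δ_n)_{n≥1} be a sequence of positive reals with lim_{n→∞} δ_n = 0. Then for every f ∈ L¹(X,μ;E) that is weakly mixing with respect to T, for μ-a.e. x ∈ X one has lim_{N→∞} sup_{(c_n)_{n=1}^N ∈ 𝓒(N,δ_N)} ‖(1/N)·Σ_{n=1}^N (Tⁿf)(x)·c_n‖ = 0. -/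
open MeasureTheory Filter Topology Metric
open scoped ENNReal NNReal

noncomputable section

/-- The set `𝓒(N,δ)` of tuples `(c_n)_{n=1}^N` in the closed unit disc such that there is
`λ ∈ 𝕊¹` with `(1/N) ∑_{n=1}^{N-1} |λ c_n - c_{n+1}| < δ`. -/
def MemC (N : ℕ) (δ : ℝ) (c : ℕ → ℂ) : Prop :=
  (∀ n ∈ Finset.Icc 1 N, ‖c n‖ ≤ 1) ∧
    ∃ z : ℂ, ‖z‖ = 1 ∧
      (N : ℝ)⁻¹ * ∑ n ∈ Finset.Icc 1 (N - 1), ‖z * c n - c (n + 1)‖ < δ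

section AuxLemmas

variable {X : Type*} [MeasurableSpace X] {E : Type*} [NormedAddCommGroup E]
    [NormedSpace ℂ E] [CompleteSpace E] {μ : Measure X}

lemma auxWW_dense_Linfty (g : Lp E 1 μ) {ε : ℝ} (hε : 0 < ε) :
    ∃ h : Lp E 1 μ, eLpNorm (⇑h) ⊤ μ ≠ ⊤ ∧ ‖g - h‖ < ε := by
  obtain ⟨s, hs⟩ := Metric.denseRange_iff.mp
    (MeasureTheory.Lp.simpleFunc.denseRange (E := E) (μ := μ) (p := 1) ENNReal.one_ne_top) g ε hε
  refine ⟨(s : Lp E 1 μ), ?_, by rwa [← dist_eq_norm]⟩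
  obtain ⟨Cb, hCb⟩ := (Lp.simpleFunc.toSimpleFunc s).exists_forall_norm_le
  have hae : ⇑(s : Lp E 1 μ) =ᵐ[μ] Lp.simpleFunc.toSimpleFunc s :=
    (Lp.simpleFunc.toSimpleFunc_eq_toFun s).symm
  rw [eLpNorm_congr_ae hae, eLpNorm_exponent_top]
  exact ((eLpNormEssSup_le_of_ae_bound (C := Cb) (.of_forall hCb)).trans_lt
    ENNReal.ofReal_lt_top).ne

/-- Abel summation identity for the coboundary trick. -/
lemma auxWW_abel {F : Type*} [AddCommGroup F] [Module ℂ F] (c : ℕ → ℂ) (lam : ℂ) (B : ℕ → F) :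
    ∀ m : ℕ, ∑ n ∈ Finset.Icc 1 (m + 1), (c n • B n - (lam * c n) • B (n + 1))
      = c 1 • B 1 - (lam * c (m + 1)) • B (m + 2) +
        ∑ n ∈ Finset.Icc 1 m, (c (n + 1) - lam * c n) • B (n + 1) := by
  intro m
  induction m with
  | zero => simp
  | succ m ih =>
      rw [Finset.sum_Icc_succ_top (by omega), ih, Finset.sum_Icc_succ_top (by omega : 1 ≤ m + 1),
        sub_smul]
      abel

/-- For a weakly mixing `f` and any unimodular `lam`, `f` lies in the closure of the range of
`I - lam • T`, and the generator can be chosen in `L^∞`. -/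
lemma auxWW_range (T : Lp E 1 μ →L[ℂ] Lp E 1 μ) (f : Lp E 1 μ)
    (hf : ∀ g' : Lp E 1 μ →L[ℂ] ℂ,
      Tendsto (fun N : ℕ => (N : ℝ)⁻¹ * ∑ n ∈ Finset.Icc 1 N, ‖g' ((T ^ n) f)‖)
        atTop (𝓝 0))
    (lam : ℂ) (hlam : ‖lam‖ = 1) {ε : ℝ} (hε : 0 < ε) :
    ∃ h : Lp E 1 μ, eLpNorm (⇑h) ⊤ μ ≠ ⊤ ∧ ‖f - (h - lam • T h)‖ < ε := by
  set D : Lp E 1 μ →L[ℂ] Lp E 1 μ := ContinuousLinearMap.id ℂ _ - lam • T with hD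
  have hDapp : ∀ h : Lp E 1 μ, D h = h - lam • T h := fun h => by
    simp [hD, ContinuousLinearMap.sub_apply, ContinuousLinearMap.smul_apply]
  set p : Submodule ℂ (Lp E 1 μ) :=
    LinearMap.range (D : Lp E 1 μ →ₗ[ℂ] Lp E 1 μ) with hp
  have hmemp : ∀ h : Lp E 1 μ, D h ∈ p := fun h => LinearMap.mem_range_self _ h
  have hfc : f ∈ closure (p : Set (Lp E 1 μ)) := by
    by_contra hfc
    obtain ⟨g', u, hu1, hu2⟩ := RCLike.geometric_hahn_banach_closed_point (𝕜 := ℂ)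
      ((p.restrictScalars ℝ).convex.closure) isClosed_closure hfc
    have hu0 : 0 < u := by
      have := hu1 0 (subset_closure p.zero_mem)
      simpa using this
    have hvan : ∀ a ∈ p, g' a = 0 := by
      intro a ha
      by_contra hga
      have hmem : ((((u + 1 : ℝ)) : ℂ) / g' a) • a ∈ p := p.smul_mem _ ha
      have h2 := hu1 _ (subset_closure hmem)
      rw [_root_.map_smul, smul_eq_mul, div_mul_cancel₀ _ hga] at h2
      simp at h2
      linarith
    have hcob : ∀ n : ℕ, ∃ w, f - lam ^ n • (T ^ n) f = D w := by
      intro n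
      induction n with
      | zero => exact ⟨0, by simp⟩
      | succ n ih =>
          obtain ⟨w, hw⟩ := ih
          refine ⟨w + lam ^ n • (T ^ n) f, ?_⟩
          have hTT : T ((T ^ n) f) = (T ^ (n + 1)) f := by
            rw [pow_succ', ContinuousLinearMap.mul_apply]
          rw [map_add, ← hw, hDapp, _root_.map_smul, hTT, smul_smul, ← pow_succ']
          abel
    have hbound : ∀ N : ℕ, 1 ≤ N →
        ‖g' f‖ ≤ (N : ℝ)⁻¹ * ∑ n ∈ Finset.Icc 1 N, ‖g' ((T ^ n) f)‖ := by
      intro N hN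
      choose w hw using hcob
      have hsum : (N : ℕ) • f
          = D (∑ n ∈ Finset.Icc 1 N, w n) + ∑ n ∈ Finset.Icc 1 N, lam ^ n • (T ^ n) f := by
        rw [map_sum]
        have hcongr : ∀ n ∈ Finset.Icc 1 N, D (w n) = f - lam ^ n • (T ^ n) f :=
          fun n _ => (hw n).symm
        rw [Finset.sum_congr rfl hcongr, Finset.sum_sub_distrib, Finset.sum_const, Nat.card_Icc]
        simp only [Nat.add_sub_cancel]
        abel
      have happ := congrArg g' hsum
      rw [map_add, hvan _ (hmemp _), zero_add, map_nsmul, map_sum] at happ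
      have hnorm : (N : ℝ) * ‖g' f‖ ≤ ∑ n ∈ Finset.Icc 1 N, ‖g' ((T ^ n) f)‖ := by
        calc (N : ℝ) * ‖g' f‖ = ‖(N : ℕ) • g' f‖ := by
              rw [nsmul_eq_mul, norm_mul, Complex.norm_natCast]
          _ = ‖∑ n ∈ Finset.Icc 1 N, g' (lam ^ n • (T ^ n) f)‖ := by rw [happ]
          _ ≤ ∑ n ∈ Finset.Icc 1 N, ‖g' (lam ^ n • (T ^ n) f)‖ := norm_sum_le _ _
          _ = ∑ n ∈ Finset.Icc 1 N, ‖g' ((T ^ n) f)‖ := by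
              refine Finset.sum_congr rfl fun n _ => ?_
              rw [_root_.map_smul, smul_eq_mul, norm_mul, norm_pow, hlam, one_pow, one_mul]
      have hNpos : (0 : ℝ) < N := by exact_mod_cast hN
      rw [inv_mul_eq_div, le_div_iff₀ hNpos]
      linarith [hnorm]
    have hgf0 : ‖g' f‖ ≤ 0 :=
      ge_of_tendsto (hf g') (eventually_atTop.mpr ⟨1, hbound⟩)
    have : g' f = 0 := by
      have := norm_le_zero_iff.mp hgf0
      exact this
    rw [this] at hu2
    simp at hu2
    linarith
  obtain ⟨y, hy, hyd⟩ := Metric.mem_closure_iff.mp hfc (ε / 2) (by positivity)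
  obtain ⟨h₀, rfl⟩ := hy
  obtain ⟨h, hhfin, hh⟩ := auxWW_dense_Linfty (μ := μ) h₀
    (ε := ε / (2 * (1 + ‖T‖))) (by positivity)
  refine ⟨h, hhfin, ?_⟩
  have hTnorm : (0 : ℝ) < 1 + ‖T‖ := by positivity
  have hkey : ‖f - (h - lam • T h)‖ ≤ ‖f - D h₀‖ + ‖D (h₀ - h)‖ := by
    have : f - (h - lam • T h) = (f - D h₀) + D (h₀ - h) := by
      rw [hDapp, map_sub, hDapp, hDapp]
      abel
    rw [this]
    exact norm_add_le _ _
  have hD2 : ‖D (h₀ - h)‖ ≤ (1 + ‖T‖) * ‖h₀ - h‖ := by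
    rw [hDapp]
    calc ‖(h₀ - h) - lam • T (h₀ - h)‖ ≤ ‖h₀ - h‖ + ‖lam • T (h₀ - h)‖ := norm_sub_le _ _
      _ = ‖h₀ - h‖ + ‖T (h₀ - h)‖ := by rw [norm_smul, hlam, one_mul]
      _ ≤ ‖h₀ - h‖ + ‖T‖ * ‖h₀ - h‖ := by
          gcongr
          exact T.le_opNorm _
      _ = (1 + ‖T‖) * ‖h₀ - h‖ := by ring
  have hyd' : ‖f - D h₀‖ < ε / 2 := by
    rw [← dist_eq_norm]
    exact hyd
  have hh' : (1 + ‖T‖) * ‖h₀ - h‖ < ε / 2 := by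
    calc (1 + ‖T‖) * ‖h₀ - h‖ < (1 + ‖T‖) * (ε / (2 * (1 + ‖T‖))) := by gcongr
      _ = ε / 2 := by field_simp
  linarith [hkey, hD2]

end AuxLemmas

set_option maxHeartbeats 2000000 in
/-- **Uniform Wiener-Wintner type theorem with coefficients from `𝓒(N,δ_N)` for weakly mixing
elements with respect to spaCb operators.** If `T` is a bounded linear spaCb operator on
`L¹(X,μ;E)` (`μ` σ-finite, `E` Banach), `(δ_n) ⊆ ℝ⁺` tends to `0`, and `f ∈ L¹(X,μ;E)` is
weakly mixing with respect to `T`, then for a.e. `x ∈ X` we have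
`lim_N sup_{(c_n) ∈ 𝓒(N,δ_N)} ‖(1/N) ∑_{n=1}^N c_n (Tⁿf)(x)‖ = 0`. -/
theorem uniform_wiener_wintner_weakly_mixing_C
    {X : Type*} [MeasurableSpace X] {E : Type*} [NormedAddCommGroup E] [NormedSpace ℂ E]
    [CompleteSpace E] (μ : Measure X) [SigmaFinite μ]
    (T : Lp E 1 μ →L[ℂ] Lp E 1 μ) (hT : IsSpaCb μ T)
    (δ : ℕ → ℝ) (hδpos : ∀ n, 0 < δ n) (hδ : Tendsto δ atTop (𝓝 0))
    (f : Lp E 1 μ)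
    (hf : ∀ g' : Lp E 1 μ →L[ℂ] ℂ,
      Tendsto (fun N : ℕ => (N : ℝ)⁻¹ * ∑ n ∈ Finset.Icc 1 N, ‖g' ((T ^ n) f)‖)
        atTop (𝓝 0)) :
    ∀ᵐ x ∂μ, Tendsto (fun N : ℕ =>
        ⨆ c : {c : ℕ → ℂ // MemC N (δ N) c},
          (N : ℝ)⁻¹ * ‖∑ n ∈ Finset.Icc 1 N, c.1 n • ((T ^ n) f) x‖)
      atTop (𝓝 0) := by
  obtain ⟨C, hC, hpa, hbd⟩ := hT
  have hNonempty : ∀ N : ℕ, Nonempty {c : ℕ → ℂ // MemC N (δ N) c} := by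
    intro N
    refine ⟨⟨fun _ => 0, ⟨fun n _ => by simp, 1, by simp, ?_⟩⟩⟩
    simpa using hδpos N
  have hSnonneg : ∀ (N : ℕ) (x : X), 0 ≤ ⨆ c : {c : ℕ → ℂ // MemC N (δ N) c},
      (N : ℝ)⁻¹ * ‖∑ n ∈ Finset.Icc 1 N, c.1 n • ((T ^ n) f) x‖ :=
    fun N x => Real.iSup_nonneg fun c => by positivity
  have key : ∀ ε : ℝ, 0 < ε → ∀ᵐ x ∂μ, ∀ᶠ N in atTop,
      (⨆ c : {c : ℕ → ℂ // MemC N (δ N) c},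
        (N : ℝ)⁻¹ * ‖∑ n ∈ Finset.Icc 1 N, c.1 n • ((T ^ n) f) x‖) < ε := by
    intro ε hε
    set ε' : ℝ := ε / (C + 5) with hε'def
    have hε' : 0 < ε' := by positivity
    have hex : ∀ z : ℂ, ∃ h : Lp E 1 μ, eLpNorm (⇑h) ⊤ μ ≠ ⊤ ∧
        (‖z‖ = 1 → ‖f - (h - z • T h)‖ < ε') := by
      intro z
      by_cases hz : ‖z‖ = 1
      · obtain ⟨h, h1, h2⟩ := auxWW_range T f hf z hz hε'
        exact ⟨h, h1, fun _ => h2⟩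
      · refine ⟨0, ?_, fun h => absurd h hz⟩
        rw [eLpNorm_congr_ae (Lp.coeFn_zero E 1 μ)]
        simp
    choose H hHfin hHapprox using hex
    set M : ℂ → ℝ := fun z => (ENNReal.ofReal C * eLpNorm (⇑(H z)) ⊤ μ).toReal with hMdef
    have hM0 : ∀ z, 0 ≤ M z := fun z => ENNReal.toReal_nonneg
    set ρ : ℂ → ℝ := fun z => ε' / (1 + M z) with hρdef
    have hρ0 : ∀ z, 0 < ρ z := fun z => div_pos hε' (by linarith [hM0 z])
    obtain ⟨t, ht⟩ := (isCompact_sphere (0 : ℂ) 1).elim_finite_subcover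
      (fun z : sphere (0 : ℂ) 1 => Metric.ball (z : ℂ) (ρ z))
      (fun z => Metric.isOpen_ball)
      (fun lam hlam => Set.mem_iUnion.mpr ⟨⟨lam, hlam⟩, Metric.mem_ball_self (hρ0 _)⟩)
    set r : ℂ → Lp E 1 μ := fun z => f - (H z - z • T (H z)) with hrdef
    have hrnorm : ∀ z : sphere (0 : ℂ) 1, ‖r (z : ℂ)‖ < ε' :=
      fun z => hHapprox _ (mem_sphere_zero_iff_norm.mp z.2)
    -- a.e. facts
    have ae1 : ∀ᵐ x ∂μ, ∀ z ∈ (t : Set (sphere (0 : ℂ) 1)), ∀ᶠ N : ℕ in atTop,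
        (N : ℝ)⁻¹ * ∑ n ∈ Finset.Icc 1 N, ‖((T ^ n) (r (z : ℂ))) x‖ < C * ε' + ε' := by
      rw [MeasureTheory.ae_ball_iff t.countable_toSet]
      intro z hz
      filter_upwards [hpa (r (z : ℂ))] with x hx
      have hint : ∫ y, ‖(r (z : ℂ)) y‖ ∂μ = ‖r (z : ℂ)‖ :=
        (MeasureTheory.L1.norm_eq_integral_norm _).symm
      have hlt : Filter.limsup (fun N : ℕ =>
          ENNReal.ofReal ((N : ℝ)⁻¹ * ∑ n ∈ Finset.Icc 1 N, ‖((T ^ n) (r (z : ℂ))) x‖)) atTop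
          < ENNReal.ofReal (C * ε' + ε') := by
        refine lt_of_le_of_lt hx ?_
        rw [ENNReal.ofReal_lt_ofReal_iff (by positivity)]
        rw [hint]
        nlinarith [hrnorm z, hC.le, hε']
      filter_upwards [Filter.eventually_lt_of_limsup_lt hlt] with N hN
      rw [ENNReal.ofReal_lt_ofReal_iff_of_nonneg (by positivity)] at hN
      exact hN
    have ae2 : ∀ᵐ x ∂μ, ∀ z ∈ (t : Set (sphere (0 : ℂ) 1)), ∀ n : ℕ,
        ‖((T ^ n) (H (z : ℂ))) x‖ ≤ M (z : ℂ) := by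
      rw [MeasureTheory.ae_ball_iff t.countable_toSet]
      intro z hz
      rw [ae_all_iff]
      intro n
      have hb := hbd (H (z : ℂ)) (hHfin _) n
      rw [eLpNorm_exponent_top] at hb
      have hfin : ENNReal.ofReal C * eLpNorm (⇑(H (z : ℂ))) ⊤ μ ≠ ⊤ :=
        ENNReal.mul_ne_top ENNReal.ofReal_ne_top (hHfin _)
      filter_upwards [MeasureTheory.ae_le_eLpNormEssSup
        (f := ⇑((T ^ n) (H (z : ℂ)))) (μ := μ)] with x hx
      have h2 : (‖((T ^ n) (H (z : ℂ))) x‖₊ : ℝ≥0∞)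
          ≤ ENNReal.ofReal C * eLpNorm (⇑(H (z : ℂ))) ⊤ μ := le_trans hx hb
      calc ‖((T ^ n) (H (z : ℂ))) x‖
          = ((‖((T ^ n) (H (z : ℂ))) x‖₊ : ℝ≥0∞)).toReal := by simp
        _ ≤ M (z : ℂ) := ENNReal.toReal_mono hfin h2
    have ae3 : ∀ᵐ x ∂μ, ∀ z ∈ (t : Set (sphere (0 : ℂ) 1)), ∀ n : ℕ,
        ((T ^ n) f) x = ((T ^ n) (r (z : ℂ))) x
          + (((T ^ n) (H (z : ℂ))) x - (z : ℂ) • ((T ^ (n + 1)) (H (z : ℂ))) x) := by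
      rw [MeasureTheory.ae_ball_iff t.countable_toSet]
      intro z hz
      rw [ae_all_iff]
      intro n
      have hLp : (T ^ n) f = (T ^ n) (r (z : ℂ))
          + ((T ^ n) (H (z : ℂ)) - (z : ℂ) • (T ^ (n + 1)) (H (z : ℂ))) := by
        have hf' : f = r (z : ℂ) + (H (z : ℂ) - (z : ℂ) • T (H (z : ℂ))) :=
          (sub_add_cancel f _).symm
        have hmap : ∀ v w : Lp E 1 μ,
            (T ^ n) (v + (w - (z : ℂ) • T w))
              = (T ^ n) v + ((T ^ n) w - (z : ℂ) • (T ^ (n + 1)) w) := by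
          intro v w
          have hsucc : (T ^ n) (T w) = (T ^ (n + 1)) w := by
            rw [pow_succ, ContinuousLinearMap.mul_apply]
          rw [map_add, map_sub, (T ^ n).map_smul, hsucc]
        conv_lhs => rw [hf']
        exact hmap _ _
      filter_upwards [Lp.coeFn_add ((T ^ n) (r (z : ℂ)))
          ((T ^ n) (H (z : ℂ)) - (z : ℂ) • (T ^ (n + 1)) (H (z : ℂ))),
        Lp.coeFn_sub ((T ^ n) (H (z : ℂ))) ((z : ℂ) • (T ^ (n + 1)) (H (z : ℂ))),
        Lp.coeFn_smul (z : ℂ) ((T ^ (n + 1)) (H (z : ℂ)))] with x h1 h2 h3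
      rw [hLp, h1, Pi.add_apply, h2, Pi.sub_apply, h3, Pi.smul_apply]
    filter_upwards [ae1, ae2, ae3] with x hx1 hx2 hx3
    have E1 : ∀ᶠ N : ℕ in atTop, ∀ z ∈ t,
        (N : ℝ)⁻¹ * ∑ n ∈ Finset.Icc 1 N, ‖((T ^ n) (r (z : ℂ))) x‖ < C * ε' + ε' :=
      (eventually_all_finset t).mpr fun z hz => hx1 z (Finset.mem_coe.mpr hz)
    have E2 : ∀ᶠ N : ℕ in atTop, ∀ z ∈ t, δ N < ε' / (1 + M (z : ℂ)) :=
      (eventually_all_finset t).mpr fun z hz =>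
        hδ.eventually_lt_const (div_pos hε' (by linarith [hM0 (z : ℂ)]))
    have E3 : ∀ᶠ N : ℕ in atTop, ∀ z ∈ t, 2 * M (z : ℂ) * (N : ℝ)⁻¹ < ε' := by
      refine (eventually_all_finset t).mpr fun z hz => ?_
      have htend : Tendsto (fun N : ℕ => 2 * M (z : ℂ) * (N : ℝ)⁻¹) atTop (𝓝 0) := by
        simpa using tendsto_const_nhds.mul (tendsto_inv_atTop_nhds_zero_nat (𝕜 := ℝ))
      exact htend.eventually_lt_const hε'
    have E4 : ∀ᶠ N : ℕ in atTop, 1 ≤ N := eventually_ge_atTop 1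
    filter_upwards [E1, E2, E3, E4] with N h1 h2 h3 h4
    have hNpos : (0 : ℝ) < N := by exact_mod_cast h4
    have main : ∀ c : {c : ℕ → ℂ // MemC N (δ N) c},
        (N : ℝ)⁻¹ * ‖∑ n ∈ Finset.Icc 1 N, c.1 n • ((T ^ n) f) x‖ ≤ (C + 4) * ε' := by
      rintro ⟨c, hc1, lam, hlam, hcs⟩
      dsimp only
      obtain ⟨z, hzt, hzball⟩ := Set.mem_iUnion₂.mp (ht (mem_sphere_zero_iff_norm.mpr hlam))
      set z₀ : ℂ := (z : ℂ) with hz₀def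
      set A : ℕ → E := fun n => ((T ^ n) (r z₀)) x with hAdef
      set B : ℕ → E := fun n => ((T ^ n) (H z₀)) x with hBdef
      have hdist : ‖lam - z₀‖ < ρ z₀ := by
        rw [← dist_eq_norm]; exact Metric.mem_ball.mp hzball
      have hterm : ∀ n ∈ Finset.Icc 1 N, c n • ((T ^ n) f) x
          = c n • A n + (c n • B n - (lam * c n) • B (n + 1))
            + ((lam - z₀) * c n) • B (n + 1) := by
        intro n hn
        rw [hx3 z (Finset.mem_coe.mpr hzt) n, hAdef, hBdef, hz₀def]
        dsimp only
        module
      rw [Finset.sum_congr rfl hterm, Finset.sum_add_distrib, Finset.sum_add_distrib]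
      set S1 := ∑ n ∈ Finset.Icc 1 N, c n • A n with hS1def
      set S2 := ∑ n ∈ Finset.Icc 1 N, (c n • B n - (lam * c n) • B (n + 1)) with hS2def
      set S3 := ∑ n ∈ Finset.Icc 1 N, ((lam - z₀) * c n) • B (n + 1) with hS3def
      have hBle : ∀ n : ℕ, ‖B n‖ ≤ M z₀ := fun n => hx2 z (Finset.mem_coe.mpr hzt) n
      have hS1 : ‖S1‖ ≤ ∑ n ∈ Finset.Icc 1 N, ‖A n‖ := by
        refine (norm_sum_le _ _).trans (Finset.sum_le_sum fun n hn => ?_)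
        rw [norm_smul]
        exact mul_le_of_le_one_left (norm_nonneg _) (hc1 n hn)
      have hsum' : ∑ n ∈ Finset.Icc 1 (N - 1), ‖lam * c n - c (n + 1)‖ ≤ N * δ N := by
        have := hcs
        rw [inv_mul_eq_div, div_lt_iff₀ hNpos] at this
        calc ∑ n ∈ Finset.Icc 1 (N - 1), ‖lam * c n - c (n + 1)‖ ≤ δ N * N := this.le
          _ = N * δ N := mul_comm _ _
      have hS2 : ‖S2‖ ≤ M z₀ * (2 + N * δ N) := by
        obtain ⟨m, rfl⟩ : ∃ m, N = m + 1 := ⟨N - 1, by omega⟩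
        rw [hS2def, auxWW_abel c lam B m]
        have hn1 : (1 : ℕ) ∈ Finset.Icc 1 (m + 1) := by simp
        have hn2 : (m + 1 : ℕ) ∈ Finset.Icc 1 (m + 1) := by simp
        have hb1 : ‖c 1 • B 1‖ ≤ 1 * M z₀ := by
          rw [norm_smul]
          exact mul_le_mul (hc1 1 hn1) (hBle 1) (norm_nonneg _) zero_le_one
        have hb2 : ‖(lam * c (m + 1)) • B (m + 2)‖ ≤ 1 * M z₀ := by
          rw [norm_smul, norm_mul, hlam, one_mul]
          exact mul_le_mul (hc1 (m + 1) hn2) (hBle (m + 2)) (norm_nonneg _) zero_le_one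
        have hb3 : ‖∑ n ∈ Finset.Icc 1 m, (c (n + 1) - lam * c n) • B (n + 1)‖
            ≤ ((m + 1 : ℕ) : ℝ) * δ (m + 1) * M z₀ := by
          refine (norm_sum_le _ _).trans ?_
          have step : ∀ n ∈ Finset.Icc 1 m, ‖(c (n + 1) - lam * c n) • B (n + 1)‖
              ≤ ‖lam * c n - c (n + 1)‖ * M z₀ := by
            intro n hn
            rw [norm_smul, norm_sub_rev]
            exact mul_le_mul_of_nonneg_left (hBle (n + 1)) (norm_nonneg _)
          refine (Finset.sum_le_sum step).trans ?_
          rw [← Finset.sum_mul]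
          have : ∑ n ∈ Finset.Icc 1 m, ‖lam * c n - c (n + 1)‖
              ≤ ((m + 1 : ℕ) : ℝ) * δ (m + 1) := by
            have := hsum'
            simpa using this
          exact mul_le_mul_of_nonneg_right this (hM0 z₀)
        calc ‖c 1 • B 1 - (lam * c (m + 1)) • B (m + 2)
              + ∑ n ∈ Finset.Icc 1 m, (c (n + 1) - lam * c n) • B (n + 1)‖
            ≤ ‖c 1 • B 1 - (lam * c (m + 1)) • B (m + 2)‖
              + ‖∑ n ∈ Finset.Icc 1 m, (c (n + 1) - lam * c n) • B (n + 1)‖ := norm_add_le _ _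
          _ ≤ (‖c 1 • B 1‖ + ‖(lam * c (m + 1)) • B (m + 2)‖)
              + ‖∑ n ∈ Finset.Icc 1 m, (c (n + 1) - lam * c n) • B (n + 1)‖ := by
              gcongr
              exact norm_sub_le _ _
          _ ≤ (1 * M z₀ + 1 * M z₀) + ((m + 1 : ℕ) : ℝ) * δ (m + 1) * M z₀ := by
              gcongr
          _ = M z₀ * (2 + ((m + 1 : ℕ) : ℝ) * δ (m + 1)) := by ring
      have hS3 : ‖S3‖ ≤ N * (ρ z₀ * M z₀) := by
        rw [hS3def]
        refine (norm_sum_le _ _).trans ?_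
        have step : ∀ n ∈ Finset.Icc 1 N, ‖((lam - z₀) * c n) • B (n + 1)‖ ≤ ρ z₀ * M z₀ := by
          intro n hn
          rw [norm_smul, norm_mul]
          calc ‖lam - z₀‖ * ‖c n‖ * ‖B (n + 1)‖ ≤ ρ z₀ * 1 * M z₀ :=
              mul_le_mul (mul_le_mul hdist.le (hc1 n hn) (norm_nonneg _) (hρ0 z₀).le)
                (hBle (n + 1)) (norm_nonneg _) (by positivity)
            _ = ρ z₀ * M z₀ := by ring
        calc ∑ n ∈ Finset.Icc 1 N, ‖((lam - z₀) * c n) • B (n + 1)‖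
            ≤ ∑ _n ∈ Finset.Icc 1 N, (ρ z₀ * M z₀) := Finset.sum_le_sum step
          _ = (N : ℝ) * (ρ z₀ * M z₀) := by
              rw [Finset.sum_const, Nat.card_Icc, Nat.add_sub_cancel, nsmul_eq_mul]
      have hA : (N : ℝ)⁻¹ * ∑ n ∈ Finset.Icc 1 N, ‖A n‖ ≤ C * ε' + ε' := (h1 z hzt).le
      have hMδ : M z₀ * δ N ≤ ε' := by
        have hδle : δ N ≤ ε' / (1 + M z₀) := (h2 z hzt).le
        have h1M : (0 : ℝ) < 1 + M z₀ := by linarith [hM0 z₀]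
        calc M z₀ * δ N ≤ M z₀ * (ε' / (1 + M z₀)) :=
              mul_le_mul_of_nonneg_left hδle (hM0 z₀)
          _ = M z₀ * ε' / (1 + M z₀) := by ring
          _ ≤ ε' := by
              rw [div_le_iff₀ h1M]
              nlinarith [hM0 z₀, hε'.le]
      have hρM : ρ z₀ * M z₀ ≤ ε' := by
        have h1M : (0 : ℝ) < 1 + M z₀ := by linarith [hM0 z₀]
        rw [hρdef]
        dsimp only
        rw [div_mul_eq_mul_div, div_le_iff₀ h1M]
        nlinarith [hM0 z₀, hε'.le]
      have h2M : 2 * M z₀ * (N : ℝ)⁻¹ ≤ ε' := (h3 z hzt).le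
      have hnorm3 : ‖S1 + S2 + S3‖ ≤ ∑ n ∈ Finset.Icc 1 N, ‖A n‖ + M z₀ * (2 + N * δ N)
          + N * (ρ z₀ * M z₀) :=
        norm_add₃_le.trans (add_le_add (add_le_add hS1 hS2) hS3)
      have hmul : (N : ℝ)⁻¹ * ‖S1 + S2 + S3‖ ≤ (N : ℝ)⁻¹ * (∑ n ∈ Finset.Icc 1 N, ‖A n‖
          + M z₀ * (2 + N * δ N) + N * (ρ z₀ * M z₀)) :=
        mul_le_mul_of_nonneg_left hnorm3 (by positivity)
      have hexp : (N : ℝ)⁻¹ * (∑ n ∈ Finset.Icc 1 N, ‖A n‖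
          + M z₀ * (2 + N * δ N) + N * (ρ z₀ * M z₀))
          = (N : ℝ)⁻¹ * ∑ n ∈ Finset.Icc 1 N, ‖A n‖
            + (2 * M z₀ * (N : ℝ)⁻¹ + M z₀ * δ N) + ρ z₀ * M z₀ := by
        field_simp
      rw [hexp] at hmul
      linarith [hA, hMδ, hρM, h2M, hmul]
    haveI := hNonempty N
    have hle : (⨆ c : {c : ℕ → ℂ // MemC N (δ N) c},
        (N : ℝ)⁻¹ * ‖∑ n ∈ Finset.Icc 1 N, c.1 n • ((T ^ n) f) x‖) ≤ (C + 4) * ε' :=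
      ciSup_le main
    refine lt_of_le_of_lt hle ?_
    rw [hε'def, ← mul_div_assoc]
    rw [div_lt_iff₀ (by linarith : (0 : ℝ) < C + 5)]
    nlinarith
  have key' : ∀ᵐ x ∂μ, ∀ k : ℕ, ∀ᶠ N in atTop,
      (⨆ c : {c : ℕ → ℂ // MemC N (δ N) c},
        (N : ℝ)⁻¹ * ‖∑ n ∈ Finset.Icc 1 N, c.1 n • ((T ^ n) f) x‖) < 1 / ((k : ℝ) + 1) :=
    ae_all_iff.mpr fun k => key _ (by positivity)
  filter_upwards [key'] with x hx
  rw [Metric.tendsto_atTop]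
  intro ε hε
  obtain ⟨k, hk⟩ := exists_nat_one_div_lt hε
  obtain ⟨N₀, hN₀⟩ := eventually_atTop.mp (hx k)
  refine ⟨N₀, fun N hN => ?_⟩
  rw [Real.dist_eq, sub_zero, abs_of_nonneg (hSnonneg N x)]
  exact lt_trans (hN₀ N hN) hk
end
end

section
/- Let (X,𝓑,μ,φ) be a probability measure preserving system and E a Banach space. Then the Koopman operator T_φ (given by T_φf = f∘φ) is mean ergodic on L¹(X,μ;E): for every f ∈ L¹(X,μ;E) the averages (1/N)·Σ_{n=1}^N f∘φⁿ converge in the norm of L¹(X,μ;E) as N → ∞. Moreover, if the system is ergodic and ∫_X f dμ = 0, then these averages converge to 0 in L¹(X,μ;E)-norm. -/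
open MeasureTheory Filter Topology Function
open scoped ENNReal

noncomputable section

namespace KoopmanME

/-! ### General metric lemmas -/

theorem isClosed_exists_lim {F : Type*} [MetricSpace F] [CompleteSpace F]
    (A : ℕ → F → F) (hA : ∀ n f f', dist (A n f) (A n f') ≤ dist f f') :
    IsClosed {f : F | ∃ L, Tendsto (fun N => A N f) atTop (𝓝 L)} := by
  refine isClosed_of_closure_subset fun f hf => ?_
  refine cauchySeq_tendsto_of_complete (Metric.cauchySeq_iff.2 fun ε hε => ?_)
  obtain ⟨f', hf', hd⟩ := Metric.mem_closure_iff.1 hf (ε / 3) (by linarith)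
  obtain ⟨L, hL⟩ := hf'
  obtain ⟨N₀, hN₀⟩ := Metric.cauchySeq_iff.1 hL.cauchySeq (ε / 3) (by linarith)
  refine ⟨N₀, fun m hm n hn => ?_⟩
  calc dist (A m f) (A n f)
      ≤ dist (A m f) (A m f') + dist (A m f') (A n f') + dist (A n f') (A n f) :=
        dist_triangle4 _ _ _ _
    _ < ε / 3 + ε / 3 + ε / 3 := by
        gcongr
        · exact lt_of_le_of_lt (hA m f f') hd
        · exact hN₀ m hm n hn
        · exact lt_of_le_of_lt (hA n f' f) (by rwa [dist_comm])
    _ = ε := by ring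

theorem isClosed_tendsto_to {F : Type*} [MetricSpace F]
    (A : ℕ → F → F) (G : F → F) (hA : ∀ n f f', dist (A n f) (A n f') ≤ dist f f')
    (hG : ∀ f f', dist (G f) (G f') ≤ dist f f') :
    IsClosed {f : F | Tendsto (fun N => A N f) atTop (𝓝 (G f))} := by
  refine isClosed_of_closure_subset fun f hf => ?_
  refine Metric.tendsto_atTop.2 fun ε hε => ?_
  obtain ⟨f', hf', hd⟩ := Metric.mem_closure_iff.1 hf (ε / 3) (by linarith)
  obtain ⟨N₀, hN₀⟩ := Metric.tendsto_atTop.1 hf' (ε / 3) (by linarith)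
  refine ⟨N₀, fun n hn => ?_⟩
  calc dist (A n f) (G f)
      ≤ dist (A n f) (A n f') + dist (A n f') (G f') + dist (G f') (G f) :=
        dist_triangle4 _ _ _ _
    _ < ε / 3 + ε / 3 + ε / 3 := by
        gcongr
        · exact lt_of_le_of_lt (hA n f f') hd
        · exact hN₀ n hn
        · exact lt_of_le_of_lt (hG f' f) (by rwa [dist_comm])
    _ = ε := by ring

/-! ### Generic facts about Koopman-type operators on Lp -/

set_option linter.unusedSectionVars false

variable {X : Type*} [MeasurableSpace X] {μ : Measure X} [IsProbabilityMeasure μ]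
  {φ : X → X}

section Generic

variable {G : Type*} [NormedAddCommGroup G] [NormedSpace ℝ G] {p : ℝ≥0∞} [Fact (1 ≤ p)]

theorem coeFn_finsetSum {ι : Type*} (s : Finset ι) (F : ι → Lp G p μ) :
    ⇑(∑ i ∈ s, F i) =ᵐ[μ] fun x => ∑ i ∈ s, F i x := by
  classical
  induction s using Finset.induction_on with
  | empty => simp; exact Lp.coeFn_zero G p μ
  | insert a s hi ih =>
    rw [Finset.sum_insert hi]
    filter_upwards [Lp.coeFn_add (F a) (∑ i ∈ s, F i), ih] with x hx1 hx2
    rw [hx1, Pi.add_apply, hx2]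
    rw [Finset.sum_insert hi]

variable (hφ : MeasurePreserving φ μ μ)
variable {S : Lp G p μ →L[ℝ] Lp G p μ}
  (hS : ∀ g : Lp G p μ, (⇑(S g) : X → G) =ᵐ[μ] fun x => g (φ x))

include hφ hS

theorem iter_ae (n : ℕ) (g : Lp G p μ) :
    ⇑((S ^ n) g) =ᵐ[μ] fun x => g (φ^[n] x) := by
  induction n with
  | zero => simp
  | succ n ih =>
    have h1 : (S ^ (n + 1)) g = S ((S ^ n) g) := by
      rw [pow_succ', ContinuousLinearMap.mul_apply]
    rw [h1]
    have h2 := hφ.quasiMeasurePreserving.ae_eq_comp ih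
    refine (hS _).trans ?_
    filter_upwards [h2] with x hx
    simpa [Function.comp, Function.iterate_succ_apply] using hx

theorem S_eq_comp (g : Lp G p μ) :
    S g = Lp.compMeasurePreserving φ hφ g :=
  Lp.ext ((hS g).trans (Lp.coeFn_compMeasurePreserving g hφ).symm)

theorem norm_S_pow_apply (n : ℕ) (g : Lp G p μ) : ‖(S ^ n) g‖ = ‖g‖ := by
  induction n with
  | zero => simp
  | succ n ih =>
    have h1 : (S ^ (n + 1)) g = S ((S ^ n) g) := by
      rw [pow_succ', ContinuousLinearMap.mul_apply]
    rw [h1, S_eq_comp hφ hS ((S ^ n) g), Lp.norm_compMeasurePreserving _ hφ, ih]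

omit hφ hS

/-- The Birkhoff-type average `(1/N) ∑_{n<N} Sⁿ f`. -/
def Bavg (S : Lp G p μ →L[ℝ] Lp G p μ) (N : ℕ) (f : Lp G p μ) : Lp G p μ :=
  (N : ℝ)⁻¹ • ∑ n ∈ Finset.range N, (S ^ n) f

theorem Bavg_add (S : Lp G p μ →L[ℝ] Lp G p μ) (N : ℕ) (f g : Lp G p μ) :
    Bavg S N (f + g) = Bavg S N f + Bavg S N g := by
  simp [Bavg, Finset.sum_add_distrib, smul_add]

theorem Bavg_sub (S : Lp G p μ →L[ℝ] Lp G p μ) (N : ℕ) (f g : Lp G p μ) :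
    Bavg S N f - Bavg S N g = Bavg S N (f - g) := by
  rw [Bavg, Bavg, Bavg, ← smul_sub, ← Finset.sum_sub_distrib]
  simp

include hφ hS

theorem norm_Bavg_le (N : ℕ) (f : Lp G p μ) : ‖Bavg S N f‖ ≤ ‖f‖ := by
  rcases Nat.eq_zero_or_pos N with h | h
  · simp [Bavg, h]
  · calc ‖Bavg S N f‖ ≤ (N : ℝ)⁻¹ * ∑ n ∈ Finset.range N, ‖(S ^ n) f‖ := by
          rw [Bavg, norm_smul, norm_inv, Real.norm_natCast]
          gcongr
          exact norm_sum_le _ _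
      _ = (N : ℝ)⁻¹ * (N * ‖f‖) := by
          rw [Finset.sum_congr rfl fun n _ => norm_S_pow_apply hφ hS n f]
          simp
      _ = ‖f‖ := by
          field_simp

theorem dist_Bavg_le (N : ℕ) (f g : Lp G p μ) :
    dist (Bavg S N f) (Bavg S N g) ≤ dist f g := by
  rw [dist_eq_norm, dist_eq_norm, Bavg_sub]
  exact norm_Bavg_le hφ hS N _

omit hφ hS in
/-- L² functions (on a probability space) are integrable. -/
theorem integrable_L2 (h : Lp ℝ 2 μ) : Integrable (⇑h) μ :=
  memLp_one_iff_integrable.1 ((Lp.memLp h).mono_exponent one_le_two)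

end Generic

/-! ### The scalar Koopman operator on L² and its mean ergodic theorem -/

/-- The Koopman operator on real `L²`. -/
def U (hφ : MeasurePreserving φ μ μ) : Lp ℝ 2 μ →L[ℝ] Lp ℝ 2 μ :=
  (Lp.compMeasurePreservingₗᵢ ℝ φ hφ).toContinuousLinearMap

theorem hU (hφ : MeasurePreserving φ μ μ) (g : Lp ℝ 2 μ) :
    (⇑(U hφ g) : X → ℝ) =ᵐ[μ] fun x => g (φ x) :=
  Lp.coeFn_compMeasurePreserving g hφ

/-- The projection onto invariant functions in `L²`. -/
def Proj (hφ : MeasurePreserving φ μ μ) (g : Lp ℝ 2 μ) : Lp ℝ 2 μ :=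
  (LinearMap.eqLocus (U hφ : Lp ℝ 2 μ →ₗ[ℝ] Lp ℝ 2 μ) ((1 : Lp ℝ 2 μ →L[ℝ] Lp ℝ 2 μ) : Lp ℝ 2 μ →ₗ[ℝ] Lp ℝ 2 μ)).orthogonalProjectionOnto g

theorem U_Proj (hφ : MeasurePreserving φ μ μ) (g : Lp ℝ 2 μ) :
    U hφ (Proj hφ g) = Proj hφ g :=
  ((LinearMap.eqLocus (U hφ : Lp ℝ 2 μ →ₗ[ℝ] Lp ℝ 2 μ) ((1 : Lp ℝ 2 μ →L[ℝ] Lp ℝ 2 μ) : Lp ℝ 2 μ →ₗ[ℝ] Lp ℝ 2 μ)).orthogonalProjectionOnto g).2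

theorem tendsto_Bavg_U (hφ : MeasurePreserving φ μ μ) (g : Lp ℝ 2 μ) :
    Tendsto (fun N => Bavg (U hφ) N g) atTop (𝓝 (Proj hφ g)) := by
  have h := ContinuousLinearMap.tendsto_birkhoffAverage_orthogonalProjection (𝕜 := ℝ) (U hφ)
    (LinearIsometry.norm_toContinuousLinearMap_le _) g
  refine h.congr fun N => ?_
  simp [Bavg, birkhoffAverage, birkhoffSum, ContinuousLinearMap.coe_pow]

/-! ### The key lemma: convergence for indicator functions -/

section Main

variable {E : Type*} [NormedAddCommGroup E] [NormedSpace ℝ E] [CompleteSpace E]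
variable (hφ : MeasurePreserving φ μ μ)
variable {T : Lp E 1 μ →L[ℝ] Lp E 1 μ}
  (hT : ∀ g : Lp E 1 μ, (⇑(T g) : X → E) =ᵐ[μ] fun x => g (φ x))

include hφ hT

theorem tendsto_Bavg_indicator {s : Set X} (hs : MeasurableSet s) (hμs : μ s ≠ ∞) (c : E) :
    ∃ L : Lp E 1 μ,
      (⇑L =ᵐ[μ] fun x => (Proj hφ (indicatorConstLp 2 hs hμs (1:ℝ))) x • c) ∧
      Tendsto (fun N => Bavg T N (indicatorConstLp 1 hs hμs c)) atTop (𝓝 L) := by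
  set g₂ : Lp ℝ 2 μ := indicatorConstLp 2 hs hμs (1:ℝ) with hg₂
  set Pg : Lp ℝ 2 μ := Proj hφ g₂ with hPgdef
  set f₀ : Lp E 1 μ := indicatorConstLp 1 hs hμs c with hf₀
  have hPg1 : Integrable (⇑Pg) μ := integrable_L2 Pg
  have hmem : MemLp (fun x => Pg x • c) 1 μ := memLp_one_iff_integrable.2 (hPg1.smul_const c)
  refine ⟨hmem.toLp _, hmem.coeFn_toLp, ?_⟩
  have hind : ∀ y, s.indicator (fun _ => c) y = s.indicator (fun _ => (1:ℝ)) y • c := by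
    intro y
    by_cases hy : y ∈ s <;> simp [hy]
  -- pointwise identification of the averages
  have hae : ∀ N, ⇑(Bavg T N f₀) =ᵐ[μ] fun x => (Bavg (U hφ) N g₂) x • c := by
    intro N
    have hsum_T : ∀ᵐ x ∂μ, ∀ n ∈ (↑(Finset.range N) : Set ℕ),
        ((T ^ n) f₀) x = s.indicator (fun _ => c) (φ^[n] x) := by
      refine (eventually_all_finite (Finset.range N).finite_toSet).2 fun n _ => ?_
      exact (iter_ae hφ hT n f₀).trans
        ((hφ.iterate n).quasiMeasurePreserving.ae_eq_comp indicatorConstLp_coeFn)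
    have hsum_U : ∀ᵐ x ∂μ, ∀ n ∈ (↑(Finset.range N) : Set ℕ),
        (((U hφ) ^ n) g₂) x = s.indicator (fun _ => (1:ℝ)) (φ^[n] x) := by
      refine (eventually_all_finite (Finset.range N).finite_toSet).2 fun n _ => ?_
      exact (iter_ae hφ (hU hφ) n g₂).trans
        ((hφ.iterate n).quasiMeasurePreserving.ae_eq_comp indicatorConstLp_coeFn)
    filter_upwards [Lp.coeFn_smul ((N:ℝ)⁻¹) (∑ n ∈ Finset.range N, (T ^ n) f₀),
      coeFn_finsetSum (Finset.range N) (fun n => (T ^ n) f₀),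
      Lp.coeFn_smul ((N:ℝ)⁻¹) (∑ n ∈ Finset.range N, ((U hφ) ^ n) g₂),
      coeFn_finsetSum (Finset.range N) (fun n => ((U hφ) ^ n) g₂),
      hsum_T, hsum_U] with x h1 h2 h3 h4 h5 h6
    show (Bavg T N f₀ : X → E) x = _
    rw [Bavg, h1, Pi.smul_apply, h2, Bavg, h3, Pi.smul_apply, h4]
    rw [Finset.sum_congr rfl fun n hn => h5 n (Finset.mem_coe.2 hn),
      Finset.sum_congr rfl fun n hn => h6 n (Finset.mem_coe.2 hn)]
    simp only [hind]
    rw [← Finset.sum_smul, smul_assoc]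
  -- distance bound
  have hdist : ∀ N, dist (Bavg T N f₀) (hmem.toLp _) ≤ ‖c‖ * dist (Bavg (U hφ) N g₂) Pg := by
    intro N
    rw [dist_eq_norm, dist_eq_norm, Lp.norm_def]
    have hdiff : ⇑(Bavg T N f₀ - hmem.toLp _) =ᵐ[μ]
        fun x => (Bavg (U hφ) N g₂ - Pg) x • c := by
      filter_upwards [Lp.coeFn_sub (Bavg T N f₀) (hmem.toLp _), hae N, hmem.coeFn_toLp,
        Lp.coeFn_sub (Bavg (U hφ) N g₂) Pg] with x h1 h2 h3 h4
      rw [h1, Pi.sub_apply, h2, h3, h4, Pi.sub_apply, sub_smul]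
    rw [eLpNorm_congr_ae hdiff]
    have h5 : eLpNorm (fun x => (Bavg (U hφ) N g₂ - Pg) x • c) 1 μ
        = eLpNorm (‖c‖ • ⇑(Bavg (U hφ) N g₂ - Pg)) 1 μ := by
      refine eLpNorm_congr_norm_ae (Eventually.of_forall fun x => ?_)
      rw [Pi.smul_apply, norm_smul, norm_smul, norm_norm]
      ring
    rw [h5, eLpNorm_const_smul]
    have h6 : eLpNorm (⇑(Bavg (U hφ) N g₂ - Pg)) 1 μ
        ≤ eLpNorm (⇑(Bavg (U hφ) N g₂ - Pg)) 2 μ :=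
      eLpNorm_le_eLpNorm_of_exponent_le one_le_two (Lp.aestronglyMeasurable _)
    calc (‖(‖c‖)‖₊ • eLpNorm (⇑(Bavg (U hφ) N g₂ - Pg)) 1 μ).toReal
        ≤ (‖(‖c‖)‖₊ • eLpNorm (⇑(Bavg (U hφ) N g₂ - Pg)) 2 μ).toReal := by
          refine ENNReal.toReal_mono ?_ ?_
          · rw [ENNReal.smul_def, smul_eq_mul]
            exact ENNReal.mul_ne_top ENNReal.coe_ne_top (Lp.eLpNorm_ne_top _)
          · rw [ENNReal.smul_def, ENNReal.smul_def, smul_eq_mul, smul_eq_mul]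
            exact mul_le_mul_right h6 _
      _ = ‖c‖ * ‖Bavg (U hφ) N g₂ - Pg‖ := by
          rw [ENNReal.smul_def, smul_eq_mul, ENNReal.toReal_mul, ENNReal.coe_toReal,
            coe_nnnorm, norm_norm, Lp.norm_def]
  -- conclusion by squeezing
  have hconv := tendsto_Bavg_U hφ g₂
  rw [tendsto_iff_dist_tendsto_zero]
  have h7 : Tendsto (fun N => ‖c‖ * dist (Bavg (U hφ) N g₂) Pg) atTop (𝓝 (‖c‖ * 0)) :=
    (tendsto_iff_dist_tendsto_zero.1 hconv).const_mul _
  rw [mul_zero] at h7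
  exact squeeze_zero (fun N => dist_nonneg) hdist h7

omit hT

/-! ### Integral identities -/

theorem integral_U_pow (n : ℕ) {s : Set X} (hs : MeasurableSet s) (hμs : μ s ≠ ∞) :
    ∫ x, (((U hφ) ^ n) (indicatorConstLp 2 hs hμs (1:ℝ))) x ∂μ = (μ s).toReal := by
  rw [integral_congr_ae (iter_ae hφ (hU hφ) n (indicatorConstLp 2 hs hμs (1:ℝ)))]
  have h2 : (fun x => (indicatorConstLp 2 hs hμs (1:ℝ)) (φ^[n] x)) =ᵐ[μ]
      fun x => s.indicator (fun _ => (1:ℝ)) (φ^[n] x) :=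
    (hφ.iterate n).quasiMeasurePreserving.ae_eq_comp indicatorConstLp_coeFn
  rw [integral_congr_ae h2]
  have h3 : ∫ x, s.indicator (fun _ => (1:ℝ)) (φ^[n] x) ∂μ
      = ∫ y, s.indicator (fun _ => (1:ℝ)) y ∂μ := by
    conv_rhs => rw [← (hφ.iterate n).map_eq]
    rw [integral_map (hφ.iterate n).measurable.aemeasurable]
    exact ((measurable_const.indicator hs).stronglyMeasurable).aestronglyMeasurable
  rw [h3, integral_indicator_const _ hs]
  simp
  rfl

theorem integral_Bavg_U {N : ℕ} (hN : 1 ≤ N) {s : Set X} (hs : MeasurableSet s)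
    (hμs : μ s ≠ ∞) :
    ∫ x, (Bavg (U hφ) N (indicatorConstLp 2 hs hμs (1:ℝ))) x ∂μ = (μ s).toReal := by
  set g₂ : Lp ℝ 2 μ := indicatorConstLp 2 hs hμs (1:ℝ)
  rw [show (Bavg (U hφ) N g₂) = (N : ℝ)⁻¹ • ∑ n ∈ Finset.range N, ((U hφ) ^ n) g₂ from rfl]
  rw [integral_congr_ae (Lp.coeFn_smul ((N:ℝ)⁻¹) (∑ n ∈ Finset.range N, ((U hφ) ^ n) g₂))]
  simp only [Pi.smul_apply]
  rw [integral_smul]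
  rw [integral_congr_ae (coeFn_finsetSum (Finset.range N) (fun n => ((U hφ) ^ n) g₂))]
  rw [integral_finset_sum _ (fun n _ => integrable_L2 _)]
  rw [Finset.sum_congr rfl fun n _ => integral_U_pow hφ n hs hμs]
  rw [Finset.sum_const, Finset.card_range, nsmul_eq_mul, smul_eq_mul]
  have hN0 : (N:ℝ) ≠ 0 := Nat.cast_ne_zero.2 (Nat.one_le_iff_ne_zero.1 hN)
  field_simp

theorem integral_Proj_indicator {s : Set X} (hs : MeasurableSet s) (hμs : μ s ≠ ∞) :
    ∫ x, (Proj hφ (indicatorConstLp 2 hs hμs (1:ℝ))) x ∂μ = (μ s).toReal := by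
  set g₂ : Lp ℝ 2 μ := indicatorConstLp 2 hs hμs (1:ℝ)
  set Pg : Lp ℝ 2 μ := Proj hφ g₂
  have hconv := tendsto_Bavg_U hφ g₂
  -- the integrals converge
  have hd : ∀ N, dist (∫ x, (Bavg (U hφ) N g₂) x ∂μ) (∫ x, Pg x ∂μ)
      ≤ dist (Bavg (U hφ) N g₂) Pg := by
    intro N
    rw [Real.dist_eq, ← integral_sub (integrable_L2 _) (integrable_L2 _)]
    have h1 : (fun x => (Bavg (U hφ) N g₂) x - Pg x) =ᵐ[μ] ⇑(Bavg (U hφ) N g₂ - Pg) := by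
      filter_upwards [Lp.coeFn_sub (Bavg (U hφ) N g₂) Pg] with x hx
      rw [hx, Pi.sub_apply]
    rw [integral_congr_ae h1]
    set w : X → ℝ := ⇑(Bavg (U hφ) N g₂ - Pg)
    calc |∫ x, w x ∂μ| ≤ ∫ x, ‖w x‖ ∂μ := by
          simpa [Real.norm_eq_abs] using norm_integral_le_integral_norm w
      _ = ‖(memLp_one_iff_integrable.2 (integrable_L2 _)).toLp w‖ := by
          rw [L1.norm_eq_integral_norm]
          refine integral_congr_ae ?_
          filter_upwards [MemLp.coeFn_toLp (memLp_one_iff_integrable.2 (integrable_L2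
            (Bavg (U hφ) N g₂ - Pg)))] with x hx
          rw [hx]
      _ ≤ dist (Bavg (U hφ) N g₂) Pg := by
          rw [dist_eq_norm, Lp.norm_def, Lp.norm_def,
            eLpNorm_congr_ae (MemLp.coeFn_toLp _)]
          refine ENNReal.toReal_mono (Lp.eLpNorm_ne_top _) ?_
          exact eLpNorm_le_eLpNorm_of_exponent_le one_le_two (Lp.aestronglyMeasurable _)
  have hconv2 : Tendsto (fun N => ∫ x, (Bavg (U hφ) N g₂) x ∂μ) atTop
      (𝓝 (∫ x, Pg x ∂μ)) := by
    rw [tendsto_iff_dist_tendsto_zero]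
    exact squeeze_zero (fun N => dist_nonneg) hd (tendsto_iff_dist_tendsto_zero.1 hconv)
  have heq : ∀ᶠ N in atTop, ∫ x, (Bavg (U hφ) N g₂) x ∂μ = (μ s).toReal := by
    filter_upwards [eventually_ge_atTop 1] with N hN
    exact integral_Bavg_U hφ hN hs hμs
  have := hconv2.congr' heq
  exact tendsto_nhds_unique this tendsto_const_nhds

theorem Proj_indicator_ae_const (hE : Ergodic φ μ) {s : Set X} (hs : MeasurableSet s)
    (hμs : μ s ≠ ∞) :
    ⇑(Proj hφ (indicatorConstLp 2 hs hμs (1:ℝ))) =ᵐ[μ] fun _ => (μ s).toReal := by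
  set g₂ : Lp ℝ 2 μ := indicatorConstLp 2 hs hμs (1:ℝ)
  set Pg : Lp ℝ 2 μ := Proj hφ g₂
  have hfix : U hφ Pg = Pg := U_Proj hφ g₂
  have hinv : ⇑Pg ∘ φ =ᵐ[μ] ⇑Pg := by
    have h1 := hU hφ Pg
    rw [hfix] at h1
    exact h1.symm
  obtain ⟨κ, hκ⟩ := hE.ae_eq_const_of_ae_eq_comp_ae (Lp.aestronglyMeasurable Pg) hinv
  have h2 : ∫ x, Pg x ∂μ = κ := by
    rw [integral_congr_ae hκ]
    simp [Function.const, measure_univ]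
  have h3 : κ = (μ s).toReal := by rw [← h2, integral_Proj_indicator hφ hs hμs]
  rw [← h3]
  exact hκ

/-! ### Constant functions in L¹ -/

/-- The constant function as an element of L¹. -/
def CstL (μ : Measure X) [IsProbabilityMeasure μ] {E : Type*} [NormedAddCommGroup E]
    (v : E) : Lp E 1 μ :=
  (memLp_const v).toLp _

omit hφ

theorem coeFn_CstL (v : E) : ⇑(CstL μ v) =ᵐ[μ] fun _ => v :=
  MemLp.coeFn_toLp _

theorem CstL_zero : CstL μ (0 : E) = 0 :=
  Lp.ext ((coeFn_CstL (0 : E)).trans (Lp.coeFn_zero E 1 μ).symm)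

theorem CstL_add (v w : E) : CstL μ (v + w) = CstL μ v + CstL μ w := by
  refine Lp.ext ?_
  filter_upwards [coeFn_CstL (μ := μ) (v + w), Lp.coeFn_add (CstL μ v) (CstL μ w),
    coeFn_CstL (μ := μ) v, coeFn_CstL (μ := μ) w] with x h1 h2 h3 h4
  rw [h1, h2, Pi.add_apply, h3, h4]

theorem integral_CstL (v : E) : ∫ x, (CstL μ v) x ∂μ = v := by
  rw [integral_congr_ae (coeFn_CstL v), integral_const]
  simp

theorem dist_CstL_le (v w : E) : dist (CstL μ v) (CstL μ w) ≤ dist v w := by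
  rw [dist_eq_norm, dist_eq_norm, Lp.norm_def]
  have h1 : ⇑(CstL μ v - CstL μ w) =ᵐ[μ] fun _ => v - w := by
    filter_upwards [Lp.coeFn_sub (CstL μ v) (CstL μ w), coeFn_CstL (μ := μ) v,
      coeFn_CstL (μ := μ) w] with x hx h3 h4
    rw [hx, Pi.sub_apply, h3, h4]
  rw [eLpNorm_congr_ae h1, eLpNorm_const _ one_ne_zero (IsProbabilityMeasure.ne_zero μ)]
  simp [ENNReal.toReal_mul]

include hφ hT in
theorem T_CstL (v : E) : T (CstL μ v) = CstL μ v := by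
  refine Lp.ext ((hT _).trans ?_)
  have h1 : (fun x => (CstL μ v) (φ x)) =ᵐ[μ] fun _ => v :=
    hφ.quasiMeasurePreserving.ae_eq_comp (coeFn_CstL v)
  exact h1.trans (coeFn_CstL v).symm

include hφ hT in
theorem part1 (f : Lp E 1 μ) :
    ∃ L : Lp E 1 μ, Tendsto (fun N => Bavg T N f) atTop (𝓝 L) := by
  refine Lp.induction (E := E) (μ := μ) (p := 1) ENNReal.one_ne_top
    (fun f => ∃ L : Lp E 1 μ, Tendsto (fun N => Bavg T N f) atTop (𝓝 L)) ?_ ?_ ?_ f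
  · intro c s hs hμs
    rw [Lp.simpleFunc.coe_indicatorConst]
    obtain ⟨L, -, hL⟩ := tendsto_Bavg_indicator hφ hT hs hμs.ne c
    exact ⟨L, hL⟩
  · rintro f g hf hg - ⟨Lf, hLf⟩ ⟨Lg, hLg⟩
    exact ⟨Lf + Lg, (hLf.add hLg).congr fun N => (Bavg_add T N _ _).symm⟩
  · exact isClosed_exists_lim _ (dist_Bavg_le hφ hT)

include hφ hT in
theorem part2 (hE : Ergodic φ μ) (f : Lp E 1 μ) :
    Tendsto (fun N => Bavg T N f) atTop (𝓝 (CstL μ (∫ x, f x ∂μ))) := by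
  refine Lp.induction (E := E) (μ := μ) (p := 1) ENNReal.one_ne_top
    (fun f => Tendsto (fun N => Bavg T N f) atTop (𝓝 (CstL μ (∫ x, f x ∂μ)))) ?_ ?_ ?_ f
  · intro c s hs hμs
    rw [Lp.simpleFunc.coe_indicatorConst]
    obtain ⟨L, hLae, hL⟩ := tendsto_Bavg_indicator hφ hT hs hμs.ne c
    have hLeq : L = CstL μ (∫ x, (indicatorConstLp 1 hs hμs.ne c) x ∂μ) := by
      refine Lp.ext ?_
      have h1 : ∫ x, (indicatorConstLp 1 hs hμs.ne c) x ∂μ = (μ s).toReal • c :=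
        integral_indicatorConstLp hs hμs.ne c
      rw [h1]
      refine hLae.trans (EventuallyEq.trans ?_ (coeFn_CstL _).symm)
      filter_upwards [Proj_indicator_ae_const hφ hE hs hμs.ne] with x hx
      rw [hx]
    rw [← hLeq]
    exact hL
  · rintro f g hf hg - hPf hPg
    have hint : ∫ x, (hf.toLp f + hg.toLp g) x ∂μ
        = (∫ x, (hf.toLp f) x ∂μ) + ∫ x, (hg.toLp g) x ∂μ := by
      rw [integral_congr_ae (Lp.coeFn_add (hf.toLp f) (hg.toLp g))]
      simp only [Pi.add_apply]
      exact integral_add (L1.integrable_coeFn _) (L1.integrable_coeFn _)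
    have := hPf.add hPg
    rw [← CstL_add] at this
    rw [hint]
    exact this.congr fun N => (Bavg_add T N _ _).symm
  · refine isClosed_tendsto_to (Bavg T) (fun f => CstL μ (∫ x, f x ∂μ))
      (dist_Bavg_le hφ hT) ?_
    intro f f'
    refine (dist_CstL_le _ _).trans ?_
    rw [dist_eq_norm, dist_eq_norm, ← integral_sub (L1.integrable_coeFn _) (L1.integrable_coeFn _)]
    have h1 : (fun x => f x - f' x) =ᵐ[μ] ⇑(f - f') := by
      filter_upwards [Lp.coeFn_sub f f'] with x hx
      rw [hx, Pi.sub_apply]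
    rw [integral_congr_ae h1]
    calc ‖∫ x, (f - f') x ∂μ‖ ≤ ∫ x, ‖(f - f') x‖ ∂μ := norm_integral_le_integral_norm _
      _ = ‖f - f'‖ := (L1.norm_eq_integral_norm _).symm

include hφ hT in
theorem Icc_eq (N : ℕ) (f : Lp E 1 μ) :
    (N : ℝ)⁻¹ • ∑ n ∈ Finset.Icc 1 N, (T ^ n) f = T (Bavg T N f) := by
  rw [Bavg, _root_.map_smul]
  congr 1
  rw [map_sum, ← Finset.Ico_add_one_right_eq_Icc, Finset.sum_Ico_eq_sum_range]
  simp only [Nat.add_sub_cancel, Nat.succ_sub_one]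
  refine Finset.sum_congr rfl fun i _ => ?_
  rw [pow_add, pow_one, ContinuousLinearMap.mul_apply]

end Main

end KoopmanME

end

open MeasureTheory Filter Topology

noncomputable section

/-- **Mean ergodicity of the Koopman operator on Bochner spaces.** Let `(X,𝓑,μ,φ)` be a
probability measure preserving system and `E` a Banach space. If `T` is the Koopman operator
on `L¹(X,μ;E)`, i.e. `T g = g ∘ φ` a.e. for every `g`, then `T` is mean ergodic: for every
`f ∈ L¹(X,μ;E)` the averages `(1/N) ∑_{n=1}^N Tⁿ f` converge in the norm of `L¹(X,μ;E)`.
Moreover, if the system is ergodic and `∫_X f dμ = 0`, then the averages converge to `0`. -/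
theorem koopman_mean_ergodic_bochner
    {X : Type*} [MeasurableSpace X] {E : Type*} [NormedAddCommGroup E] [NormedSpace ℝ E]
    [CompleteSpace E] (μ : Measure X) [IsProbabilityMeasure μ]
    (φ : X → X) (hφ : MeasurePreserving φ μ μ)
    (T : Lp E 1 μ →L[ℝ] Lp E 1 μ)
    (hT : ∀ g : Lp E 1 μ, (⇑(T g) : X → E) =ᵐ[μ] fun x => g (φ x)) :
    (∀ f : Lp E 1 μ, ∃ L : Lp E 1 μ,
      Tendsto (fun N : ℕ => (N : ℝ)⁻¹ • ∑ n ∈ Finset.Icc 1 N, (T ^ n) f) atTop (𝓝 L)) ∧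
    (Ergodic φ μ → ∀ f : Lp E 1 μ, (∫ x, f x ∂μ) = 0 →
      Tendsto (fun N : ℕ => (N : ℝ)⁻¹ • ∑ n ∈ Finset.Icc 1 N, (T ^ n) f) atTop (𝓝 0)) := by
  constructor
  · intro f
    obtain ⟨L, hL⟩ := KoopmanME.part1 hφ hT f
    refine ⟨T L, ?_⟩
    have h2 : Tendsto (fun N => T (KoopmanME.Bavg T N f)) atTop (𝓝 (T L)) :=
      (T.continuous.tendsto L).comp hL
    exact h2.congr fun N => (KoopmanME.Icc_eq hφ hT N f).symm
  · intro hE f hf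
    have h1 := KoopmanME.part2 hφ hT hE f
    rw [hf, KoopmanME.CstL_zero] at h1
    have h2 : Tendsto (fun N => T (KoopmanME.Bavg T N f)) atTop (𝓝 (T 0)) :=
      (T.continuous.tendsto 0).comp h1
    rw [map_zero] at h2
    exact h2.congr fun N => (KoopmanME.Icc_eq hφ hT N f).symm
end
end

section
/- Let E be a Banach space, (X,𝓑,μ) a σ-finite measure space, and T : L¹(X,μ;E) → L¹(X,μ;E) a bounded linear paCb operator. Then for every f ∈ L¹(X,μ;E), for μ-a.e. x ∈ X the sequence ((Tⁿf)(x))_{n≥1} lies in ces_∞(E), i.e., sup_{N∈ℕ} (1/N)·Σ_{n=1}^N ‖(Tⁿf)(x)‖ < ∞. If moreover T is spaCb, then for μ-a.e. x ∈ X the sequence ((Tⁿf)(x))_{n≥1} lies in A(E), i.e., for every ε > 0 there exists a bounded sequence (e_n) in E with limsup_{N→∞} (1/N)·Σ_{n=1}^N ‖(Tⁿf)(x) − e_n‖ < ε. -/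
open MeasureTheory Filter Topology

noncomputable section

lemma bdd_of_limsup_ofReal {a : ℕ → ℝ} (ha : ∀ N, 0 ≤ a N) {L : ENNReal} (hL : L ≠ ⊤)
    (h : Filter.limsup (fun N => ENNReal.ofReal (a N)) atTop ≤ L) :
    ∃ B : ℝ, ∀ N, a N ≤ B := by
  have h2 : ∀ᶠ N in atTop, ENNReal.ofReal (a N) < L + 1 :=
    Filter.eventually_lt_of_limsup_lt (lt_of_le_of_lt h (ENNReal.lt_add_right hL one_ne_zero))
  obtain ⟨N₀, hN₀⟩ := eventually_atTop.mp h2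
  refine ⟨(L + 1).toReal + ∑ k ∈ Finset.range N₀, a k, fun N => ?_⟩
  rcases le_or_gt N₀ N with hle | hlt
  · have := (ENNReal.ofReal_lt_iff_lt_toReal (ha N) (by finiteness)).mp (hN₀ N hle)
    have hs : 0 ≤ ∑ k ∈ Finset.range N₀, a k := Finset.sum_nonneg fun k _ => ha k
    linarith
  · have : a N ≤ ∑ k ∈ Finset.range N₀, a k :=
      Finset.single_le_sum (fun k _ => ha k) (Finset.mem_range.mpr hlt)
    have ht : (0:ℝ) ≤ (L + 1).toReal := ENNReal.toReal_nonneg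
    linarith

/-- **Pointwise orbits of paCb operators lie in `ces_∞(E)`, and of spaCb operators in `A(E)`.**
If `T` is a bounded linear paCb operator on `L¹(X,μ;E)` (`μ` σ-finite, `E` Banach) and
`f ∈ L¹(X,μ;E)`, then for a.e. `x ∈ X` the sequence `((Tⁿf)(x))_n` satisfies
`sup_N (1/N) ∑_{n=1}^N ‖(Tⁿf)(x)‖ < ∞`; if moreover `T` is spaCb, then for a.e. `x ∈ X`, for
every `ε > 0` there is a bounded sequence `(e_n)` in `E` with
`limsup_N (1/N) ∑_{n=1}^N ‖(Tⁿf)(x) - e_n‖ < ε`. -/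
theorem pointwise_orbit_mem_ces_and_A
    {X : Type*} [MeasurableSpace X] {E : Type*} [NormedAddCommGroup E] [NormedSpace ℂ E]
    [CompleteSpace E] (μ : Measure X) [SigmaFinite μ]
    (T : Lp E 1 μ →L[ℂ] Lp E 1 μ) (hpaCb : ∃ C > (0 : ℝ), IsPaCbWith μ T C)
    (f : Lp E 1 μ) :
    (∀ᵐ x ∂μ, ∃ B : ℝ, ∀ N : ℕ,
      (N : ℝ)⁻¹ * ∑ n ∈ Finset.Icc 1 N, ‖((T ^ n) f) x‖ ≤ B) ∧
    (IsSpaCb μ T →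
      ∀ᵐ x ∂μ, ∀ ε > (0 : ℝ), ∃ e : ℕ → E, (∃ D : ℝ, ∀ n, ‖e n‖ ≤ D) ∧
        Filter.limsup (fun N : ℕ =>
            ENNReal.ofReal ((N : ℝ)⁻¹ * ∑ n ∈ Finset.Icc 1 N, ‖((T ^ n) f) x - e n‖)) atTop
          < ENNReal.ofReal ε) := by
  obtain ⟨C, hC, hp⟩ := hpaCb
  constructor
  · filter_upwards [hp f] with x hx
    exact bdd_of_limsup_ofReal
      (fun N => mul_nonneg (by positivity) (Finset.sum_nonneg fun n _ => norm_nonneg _))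
      ENNReal.ofReal_ne_top hx
  · rintro ⟨C', hC', hpa, hsup⟩
    -- choose good approximations
    have hg : ∀ k : ℕ, ∃ g : Lp E 1 μ,
        eLpNorm (⇑g) ⊤ μ ≠ ⊤ ∧ C' * dist f g < 1 / (k + 1) := by
      intro k
      have hδ : (0:ℝ) < (1 / (k + 1)) / C' := by positivity
      obtain ⟨y, hy⟩ := (Lp.simpleFunc.denseRange (E := E) (μ := μ) (p := 1)
        ENNReal.one_ne_top).exists_dist_lt f hδ
      refine ⟨(y : Lp E 1 μ), ?_, ?_⟩
      · have hae := Lp.simpleFunc.toSimpleFunc_eq_toFun y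
        rw [eLpNorm_congr_ae hae.symm]
        exact ((Lp.simpleFunc.toSimpleFunc y).memLp_top μ).eLpNorm_ne_top
      · have := (mul_lt_mul_of_pos_left hy hC')
        rwa [mul_div_cancel₀ _ (ne_of_gt hC')] at this
    choose g hgfin hgclose using hg
    -- bad-set-free properties
    have hA : ∀ᵐ x ∂μ, ∀ k : ℕ,
        Filter.limsup (fun N : ℕ =>
          ENNReal.ofReal ((N : ℝ)⁻¹ * ∑ n ∈ Finset.Icc 1 N, ‖((T ^ n) (f - g k)) x‖)) atTop
          ≤ ENNReal.ofReal (C' * ∫ y, ‖(f - g k) y‖ ∂μ) := ae_all_iff.mpr fun k => hpa (f - g k)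
    have hB : ∀ᵐ x ∂μ, ∀ k n : ℕ,
        ‖((T ^ n) (g k)) x‖ ≤ (ENNReal.ofReal C' * eLpNorm (⇑(g k)) ⊤ μ).toReal := by
      rw [ae_all_iff]; intro k; rw [ae_all_iff]; intro n
      have hle := hsup (g k) (hgfin k) n
      have hM : ENNReal.ofReal C' * eLpNorm (⇑(g k)) ⊤ μ ≠ ⊤ :=
        ENNReal.mul_ne_top ENNReal.ofReal_ne_top (hgfin k)
      filter_upwards [ae_le_eLpNormEssSup (f := ⇑((T ^ n) (g k))) (μ := μ)] with x hx
      have h1 : (‖((T ^ n) (g k)) x‖₊ : ENNReal) ≤ ENNReal.ofReal C' * eLpNorm (⇑(g k)) ⊤ μ :=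
        le_trans (by simpa [eLpNorm_exponent_top, enorm_eq_nnnorm] using hx) hle
      simpa using ENNReal.toReal_mono hM h1
    have hCc : ∀ᵐ x ∂μ, ∀ k n : ℕ,
        ((T ^ n) (f - g k)) x = ((T ^ n) f) x - ((T ^ n) (g k)) x := by
      rw [ae_all_iff]; intro k; rw [ae_all_iff]; intro n
      have h1 : (T ^ n) (f - g k) = (T ^ n) f - (T ^ n) (g k) := map_sub _ _ _
      have h2 := Lp.coeFn_sub ((T ^ n) f) ((T ^ n) (g k))
      rw [h1]
      filter_upwards [h2] with x hx using hx
    filter_upwards [hA, hB, hCc] with x hAx hBx hCx ε hε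
    obtain ⟨k, hk⟩ := exists_nat_one_div_lt hε
    refine ⟨fun n => ((T ^ n) (g k)) x,
      ⟨(ENNReal.ofReal C' * eLpNorm (⇑(g k)) ⊤ μ).toReal, fun n => hBx k n⟩, ?_⟩
    have heq : (fun N : ℕ =>
        ENNReal.ofReal ((N : ℝ)⁻¹ * ∑ n ∈ Finset.Icc 1 N, ‖((T ^ n) f) x - ((T ^ n) (g k)) x‖))
        = (fun N : ℕ =>
        ENNReal.ofReal ((N : ℝ)⁻¹ * ∑ n ∈ Finset.Icc 1 N, ‖((T ^ n) (f - g k)) x‖)) := by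
      funext N
      congr 1
      congr 1
      exact Finset.sum_congr rfl fun n _ => by rw [hCx k n]
    rw [heq]
    refine lt_of_le_of_lt (hAx k) ?_
    rw [ENNReal.ofReal_lt_ofReal_iff hε]
    have hint : ∫ y, ‖(f - g k) y‖ ∂μ = dist f (g k) := by
      rw [dist_eq_norm, L1.norm_eq_integral_norm]
    rw [hint]
    calc C' * dist f (g k) < 1 / (k + 1) := hgclose k
      _ < ε := by exact_mod_cast hk
end
end

section
/- Let (X,𝓑,μ,φ) be an ergodic probability measure preserving system and let f : X → ℂ be measurable with |f(x)| ≤ 1 for μ-a.e. x. Define T : L¹(X,μ) → L¹(X,μ) by (Tg)(x) = f(x)·g(φx). Then T is strongly pointwise absolutely Cesàro bounded with constant C = 1: for every g ∈ L¹(X,μ), for μ-a.e. x ∈ X, limsup_{N→∞} (1/N)·Σ_{n=1}^N |(Tⁿg)(x)| ≤ ∫_X |g| dμ, and for every g ∈ L¹(X,μ) ∩ L^∞(X,μ) one has sup_{n∈ℕ} ‖Tⁿg‖_∞ ≤ ‖g‖_∞. -/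
open MeasureTheory Filter Topology
set_option linter.unusedSectionVars false
set_option linter.unnecessarySimpa false

noncomputable section

namespace SpaCbAux

variable {X : Type*} [MeasurableSpace X] {μ : Measure X} {φ : X → X} {h : X → ℝ}

/-- Birkhoff partial sums, front recursion. -/
def bS (φ : X → X) (h : X → ℝ) : ℕ → X → ℝ
  | 0 => fun _ => 0
  | (N + 1) => fun x => h x + bS φ h N (φ x)

/-- Running maxima of Birkhoff sums (including the empty sum `0`). -/
def mS (φ : X → X) (h : X → ℝ) : ℕ → X → ℝ
  | 0 => fun _ => 0
  | (N + 1) => fun x => max 0 (h x + mS φ h N (φ x))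

lemma bS_eq (φ : X → X) (h : X → ℝ) (N : ℕ) (x : X) :
    bS φ h N x = ∑ i ∈ Finset.range N, h (φ^[i] x) := by
  induction N generalizing x with
  | zero => simp [bS]
  | succ N ih =>
      rw [Finset.sum_range_succ']
      simp only [bS, ih (φ x), Function.iterate_succ_apply, Function.iterate_zero_apply]
      ring

lemma bS_nonneg (h0 : ∀ x, 0 ≤ h x) (N : ℕ) (x : X) : 0 ≤ bS φ h N x := by
  induction N generalizing x with
  | zero => simp [bS]
  | succ N ih => exact add_nonneg (h0 x) (ih (φ x))

lemma bS_sub_const (φ : X → X) (h : X → ℝ) (α : ℝ) (N : ℕ) (x : X) :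
    bS φ (fun z => h z - α) N x = bS φ h N x - N * α := by
  induction N generalizing x with
  | zero => simp [bS]
  | succ N ih =>
      show h x - α + bS φ (fun z => h z - α) N (φ x) = h x + bS φ h N (φ x) - (N + 1 : ℕ) * α
      rw [ih (φ x)]
      push_cast
      ring

lemma mS_nonneg (N : ℕ) (x : X) : 0 ≤ mS φ h N x := by
  cases N with
  | zero => simp [mS]
  | succ N => exact le_max_left _ _

lemma mS_mono (N : ℕ) (x : X) : mS φ h N x ≤ mS φ h (N + 1) x := by
  induction N generalizing x with
  | zero => exact mS_nonneg 1 x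
  | succ N ih => exact max_le_max le_rfl (add_le_add le_rfl (ih (φ x)))

lemma mS_mono' {M N : ℕ} (hMN : M ≤ N) (x : X) : mS φ h M x ≤ mS φ h N x := by
  induction hMN with
  | refl => exact le_rfl
  | step _ ih => exact le_trans ih (mS_mono _ x)

lemma bS_le_mS : ∀ (n N : ℕ), n ≤ N → ∀ x : X, bS φ h n x ≤ mS φ h N x := by
  intro n
  induction n with
  | zero => intro N _ x; simpa [bS] using mS_nonneg N x
  | succ n ih =>
      rintro (_ | N) hn x
      · omega
      · have hih : bS φ h n (φ x) ≤ mS φ h N (φ x) := ih N (Nat.succ_le_succ_iff.mp hn) (φ x)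
        calc bS φ h (n + 1) x = h x + bS φ h n (φ x) := rfl
          _ ≤ h x + mS φ h N (φ x) := by linarith
          _ ≤ mS φ h (N + 1) x := le_max_right _ _

lemma measurable_bS (hφ : Measurable φ) (hm : Measurable h) (N : ℕ) :
    Measurable (bS φ h N) := by
  induction N with
  | zero => simpa [bS] using measurable_const
  | succ N ih => exact hm.add (ih.comp hφ)

lemma measurable_mS (hφ : Measurable φ) (hm : Measurable h) (N : ℕ) :
    Measurable (mS φ h N) := by
  induction N with
  | zero => simpa [mS] using measurable_const
  | succ N ih => exact measurable_const.max (hm.add (ih.comp hφ))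

lemma integrable_mS [IsFiniteMeasure μ] (hφm : MeasurePreserving φ μ μ) (hm : Measurable h)
    (hi : Integrable h μ) (N : ℕ) : Integrable (mS φ h N) μ := by
  induction N with
  | zero => simpa [mS] using integrable_const (0 : ℝ)
  | succ N ih =>
      have hc : Integrable (fun x => mS φ h N (φ x)) μ :=
        (hφm.integrable_comp (measurable_mS hφm.measurable hm N).aestronglyMeasurable).mpr ih
      have : Integrable (fun x => max 0 (h x + mS φ h N (φ x))) μ := by
        exact (integrable_const (0 : ℝ)).sup (hi.add hc)
      exact this

/-- **Maximal ergodic lemma** (Garsia's proof). -/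
lemma maximal [IsFiniteMeasure μ] (hφm : MeasurePreserving φ μ μ) (hm : Measurable h)
    (hi : Integrable h μ) (N : ℕ) :
    0 ≤ ∫ x in {x | 0 < mS φ h N x}, h x ∂μ := by
  set E : Set X := {x | 0 < mS φ h N x} with hE
  have hEm : MeasurableSet E :=
    measurableSet_lt measurable_const (measurable_mS hφm.measurable hm N)
  have hPint : Integrable (mS φ h N) μ := integrable_mS hφm hm hi N
  have hPcomp : Integrable (fun x => mS φ h N (φ x)) μ :=
    (hφm.integrable_comp (measurable_mS hφm.measurable hm N).aestronglyMeasurable).mpr hPint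
  -- pointwise inequality on E
  have key : ∀ x ∈ E, mS φ h N x - mS φ h N (φ x) ≤ h x := by
    intro x hx
    have h2 : (0 : ℝ) < mS φ h (N + 1) x := lt_of_lt_of_le hx (mS_mono N x)
    have h2' : (0 : ℝ) < h x + mS φ h N (φ x) := by
      by_contra hc
      push_neg at hc
      have : mS φ h (N + 1) x = 0 := by
        show max 0 (h x + mS φ h N (φ x)) = 0
        exact max_eq_left hc
      rw [this] at h2; exact lt_irrefl 0 h2
    have h3 : mS φ h (N + 1) x = h x + mS φ h N (φ x) := max_eq_right h2'.le
    have h4 : mS φ h N x ≤ mS φ h (N + 1) x := mS_mono N x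
    linarith
  have step1 : ∫ x in E, (mS φ h N x - mS φ h N (φ x)) ∂μ ≤ ∫ x in E, h x ∂μ :=
    setIntegral_mono_on (hPint.sub hPcomp).integrableOn hi.integrableOn hEm key
  have step2 : ∫ x in E, (mS φ h N x - mS φ h N (φ x)) ∂μ
      = ∫ x in E, mS φ h N x ∂μ - ∫ x in E, mS φ h N (φ x) ∂μ :=
    integral_sub hPint.integrableOn hPcomp.integrableOn
  have step3 : ∫ x in E, mS φ h N x ∂μ = ∫ x, mS φ h N x ∂μ := by
    have hcompl : ∫ x in Eᶜ, mS φ h N x ∂μ = 0 := by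
      apply setIntegral_eq_zero_of_forall_eq_zero
      intro x hx
      have : ¬ (0 : ℝ) < mS φ h N x := hx
      exact le_antisymm (not_lt.mp this) (mS_nonneg N x)
    rw [← integral_add_compl hEm hPint, hcompl, add_zero]
  have step4 : ∫ x in E, mS φ h N (φ x) ∂μ ≤ ∫ x, mS φ h N (φ x) ∂μ :=
    setIntegral_le_integral hPcomp (Eventually.of_forall fun x => mS_nonneg N (φ x))
  have step5 : ∫ x, mS φ h N (φ x) ∂μ = ∫ x, mS φ h N x ∂μ := by
    rw [← integral_map hφm.measurable.aemeasurable, hφm.map_eq]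
    rw [hφm.map_eq]
    exact (measurable_mS hφm.measurable hm N).aestronglyMeasurable
  have : 0 ≤ ∫ x in E, (mS φ h N x - mS φ h N (φ x)) ∂μ := by
    rw [step2, step3]
    linarith [step4, step5.le, step5.ge]
  linarith

/-- Corollary of the maximal lemma: if a.e. point has some positive Birkhoff sum,
then the integral is nonnegative. -/
lemma nonneg_integral [IsFiniteMeasure μ] (hφm : MeasurePreserving φ μ μ)
    (hm : Measurable h) (hi : Integrable h μ)
    (hcond : ∀ᵐ x ∂μ, ∃ N, 0 < bS φ h N x) :
    0 ≤ ∫ x, h x ∂μ := by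
  set E : ℕ → Set X := fun N => {x | 0 < mS φ h N x} with hEdef
  have hEm : ∀ N, MeasurableSet (E N) := fun N =>
    measurableSet_lt measurable_const (measurable_mS hφm.measurable hm N)
  have hmono : Monotone E := by
    intro M N hMN x hx
    exact lt_of_lt_of_le hx (mS_mono' hMN x)
  have hFc : μ ((⋃ N, E N)ᶜ) = 0 := by
    refine measure_mono_null (fun x hx => ?_) (ae_iff.mp hcond)
    simp only [Set.mem_compl_iff, Set.mem_iUnion, not_exists] at hx
    simp only [Set.mem_setOf_eq, not_exists, not_lt]
    intro N
    exact le_trans (bS_le_mS N N le_rfl x) (not_lt.mp (hx N))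
  have htend : Tendsto (fun N => ∫ x in E N, h x ∂μ) atTop
      (𝓝 (∫ x in ⋃ N, E N, h x ∂μ)) :=
    tendsto_setIntegral_of_monotone hEm hmono hi.integrableOn
  have hgoal : 0 ≤ ∫ x in ⋃ N, E N, h x ∂μ :=
    ge_of_tendsto' htend fun N => maximal hφm hm hi N
  rwa [Measure.restrict_congr_set (ae_eq_univ.mpr hFc), Measure.restrict_univ] at hgoal


open scoped ENNReal in
lemma measurable_Phi (hφ : Measurable φ) (hm : Measurable h) :
    Measurable fun y => limsup (fun N : ℕ => ENNReal.ofReal ((N : ℝ)⁻¹ * bS φ h N y)) atTop :=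
  Measurable.limsup fun N =>
    ENNReal.measurable_ofReal.comp ((measurable_bS hφ hm N).const_mul _)

open scoped ENNReal in
lemma Phi_le_comp (h0 : ∀ x, 0 ≤ h x) (y : X) :
    limsup (fun N : ℕ => ENNReal.ofReal ((N : ℝ)⁻¹ * bS φ h N y)) atTop
      ≤ limsup (fun N : ℕ => ENNReal.ofReal ((N : ℝ)⁻¹ * bS φ h N (φ y))) atTop := by
  set L := limsup (fun N : ℕ => ENNReal.ofReal ((N : ℝ)⁻¹ * bS φ h N (φ y))) atTop with hL
  refine ENNReal.le_of_forall_pos_le_add fun ε hε hLtop => ?_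
  have hshift : limsup (fun N : ℕ => ENNReal.ofReal ((N : ℝ)⁻¹ * bS φ h N y)) atTop
      = limsup (fun N : ℕ => ENNReal.ofReal (((N + 1 : ℕ) : ℝ)⁻¹ * bS φ h (N + 1) y)) atTop :=
    (limsup_nat_add (fun N : ℕ => ENNReal.ofReal ((N : ℝ)⁻¹ * bS φ h N y)) 1).symm
  rw [hshift]
  have hε2 : (0 : ℝ≥0∞) < (ε : ℝ≥0∞) / 2 :=
    ENNReal.div_pos (by exact_mod_cast hε.ne') ENNReal.ofNat_ne_top
  have hev1 : ∀ᶠ N : ℕ in atTop,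
      ENNReal.ofReal ((N : ℝ)⁻¹ * bS φ h N (φ y)) < L + (ε : ℝ≥0∞) / 2 :=
    eventually_lt_of_limsup_lt (ENNReal.lt_add_right hLtop.ne hε2.ne')
  have hev2 : ∀ᶠ N : ℕ in atTop,
      ENNReal.ofReal (((N + 1 : ℕ) : ℝ)⁻¹ * h y) < (ε : ℝ≥0∞) / 2 := by
    have h1 : Tendsto (fun N : ℕ => ((N : ℝ) + 1)⁻¹ * h y) atTop (𝓝 0) := by
      have := tendsto_one_div_add_atTop_nhds_zero_nat.mul_const (h y)
      simpa [one_div] using this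
    have h2 : Tendsto (fun N : ℕ => ENNReal.ofReal (((N + 1 : ℕ) : ℝ)⁻¹ * h y)) atTop (𝓝 0) := by
      have := (ENNReal.continuous_ofReal.tendsto 0).comp h1
      simpa [Function.comp_def] using this
    exact h2.eventually_lt_const hε2
  have hev : ∀ᶠ N : ℕ in atTop,
      ENNReal.ofReal (((N + 1 : ℕ) : ℝ)⁻¹ * bS φ h (N + 1) y) ≤ L + (ε : ℝ≥0∞) := by
    filter_upwards [eventually_ge_atTop 1, hev1, hev2] with N hN1 h1 h2
    have hNpos : (0 : ℝ) < N := by exact_mod_cast hN1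
    have hb : bS φ h (N + 1) y = h y + bS φ h N (φ y) := rfl
    have hle : ((N + 1 : ℕ) : ℝ)⁻¹ * bS φ h (N + 1) y
        ≤ ((N + 1 : ℕ) : ℝ)⁻¹ * h y + (N : ℝ)⁻¹ * bS φ h N (φ y) := by
      rw [hb, mul_add]
      refine add_le_add le_rfl (mul_le_mul_of_nonneg_right ?_ (bS_nonneg h0 N (φ y)))
      apply inv_anti₀ hNpos
      push_cast; linarith
    calc ENNReal.ofReal (((N + 1 : ℕ) : ℝ)⁻¹ * bS φ h (N + 1) y)
        ≤ ENNReal.ofReal (((N + 1 : ℕ) : ℝ)⁻¹ * h y + (N : ℝ)⁻¹ * bS φ h N (φ y)) :=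
          ENNReal.ofReal_le_ofReal hle
      _ ≤ ENNReal.ofReal (((N + 1 : ℕ) : ℝ)⁻¹ * h y)
            + ENNReal.ofReal ((N : ℝ)⁻¹ * bS φ h N (φ y)) := ENNReal.ofReal_add_le
      _ ≤ (ε : ℝ≥0∞) / 2 + (L + (ε : ℝ≥0∞) / 2) := add_le_add h2.le h1.le
      _ = L + (ε : ℝ≥0∞) := by
          rw [add_comm ((ε : ℝ≥0∞) / 2) (L + (ε : ℝ≥0∞) / 2), add_assoc, ENNReal.add_halves]
  calc limsup (fun N : ℕ => ENNReal.ofReal (((N + 1 : ℕ) : ℝ)⁻¹ * bS φ h (N + 1) y)) atTop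
      ≤ limsup (fun _ : ℕ => L + (ε : ℝ≥0∞)) atTop := limsup_le_limsup hev
    _ = L + (ε : ℝ≥0∞) := limsup_const _

open scoped ENNReal in
/-- Half of Birkhoff's pointwise ergodic theorem : for a nonnegative integrable function
on an ergodic system, a.e. limsup of Birkhoff averages is at most the integral. -/
lemma birkhoff_limsup_le [IsProbabilityMeasure μ] (hφ : Ergodic φ μ)
    (hm : Measurable h) (hi : Integrable h μ) (h0 : ∀ x, 0 ≤ h x) :
    ∀ᵐ y ∂μ, limsup (fun N : ℕ => ENNReal.ofReal ((N : ℝ)⁻¹ * bS φ h N y)) atTop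
      ≤ ENNReal.ofReal (∫ z, h z ∂μ) := by
  set Φ : X → ℝ≥0∞ :=
    fun y => limsup (fun N : ℕ => ENNReal.ofReal ((N : ℝ)⁻¹ * bS φ h N y)) atTop with hΦdef
  have hΦm : Measurable Φ := measurable_Phi hφ.toMeasurePreserving.measurable hm
  have key : ∀ α : ℝ, (∫ z, h z ∂μ) < α → μ {y | ENNReal.ofReal α < Φ y} = 0 := by
    intro α hα
    set E := {y | ENNReal.ofReal α < Φ y} with hEdef
    have hEm : MeasurableSet E := measurableSet_lt measurable_const hΦm
    have hsub : E ⊆ φ ⁻¹' E := fun y hy => lt_of_lt_of_le hy (Phi_le_comp h0 y)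
    have hpre : μ (φ ⁻¹' E) = μ E :=
      hφ.toMeasurePreserving.measure_preimage hEm.nullMeasurableSet
    have hdiff : μ (φ ⁻¹' E \ E) = 0 := by
      rw [measure_diff hsub hEm.nullMeasurableSet (measure_ne_top μ E), hpre, tsub_self]
    have hae : φ ⁻¹' E =ᵐ[μ] E := by
      rw [ae_eq_set]
      refine ⟨hdiff, ?_⟩
      rw [Set.diff_eq_empty.mpr hsub]
      exact measure_empty
    rcases hφ.quasiErgodic.ae_empty_or_univ₀ hEm.nullMeasurableSet hae with hcase | hcase
    · calc μ E = μ (∅ : Set X) := measure_congr hcase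
        _ = 0 := measure_empty
    · exfalso
      have hαpos : (0 : ℝ) ≤ α := le_of_lt (lt_of_le_of_lt (integral_nonneg h0) hα)
      have hcompl : μ Eᶜ = 0 := ae_eq_univ.mp hcase
      have huniv : ∀ᵐ y ∂μ, y ∈ E := by
        rw [ae_iff]; exact hcompl
      have hcond : ∀ᵐ y ∂μ, ∃ N, 0 < bS φ (fun z => h z - α) N y := by
        filter_upwards [huniv] with y hy
        have hfreq : ∃ᶠ N : ℕ in atTop,
            ENNReal.ofReal α < ENNReal.ofReal ((N : ℝ)⁻¹ * bS φ h N y) :=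
          frequently_lt_of_lt_limsup (by isBoundedDefault) hy
        obtain ⟨N, hN⟩ := hfreq.exists
        have hr : α < (N : ℝ)⁻¹ * bS φ h N y := by
          by_contra hc
          push_neg at hc
          exact absurd (ENNReal.ofReal_le_ofReal hc) (not_le.mpr hN)
        have hNne : N ≠ 0 := by
          rintro rfl
          simp only [Nat.cast_zero, inv_zero, zero_mul] at hr
          linarith
        have hNpos : (0 : ℝ) < N := by exact_mod_cast Nat.pos_of_ne_zero hNne
        refine ⟨N, ?_⟩
        rw [bS_sub_const]
        have hlt : α * N < bS φ h N y := by
          rw [inv_mul_eq_div, lt_div_iff₀ hNpos] at hr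
          exact hr
        nlinarith [hlt]
      have hint : 0 ≤ ∫ z, (h z - α) ∂μ :=
        nonneg_integral hφ.toMeasurePreserving (hm.sub measurable_const)
          (hi.sub (integrable_const α)) hcond
      rw [integral_sub hi (integrable_const α), integral_const] at hint
      simp only [measureReal_def, measure_univ, ENNReal.toReal_one, smul_eq_mul, one_mul] at hint
      linarith
  have hcnt : ∀ᵐ y ∂μ, ∀ k : ℕ, Φ y ≤ ENNReal.ofReal ((∫ z, h z ∂μ) + ((k : ℝ) + 1)⁻¹) := by
    rw [ae_all_iff]
    intro k
    have hk : (∫ z, h z ∂μ) < (∫ z, h z ∂μ) + ((k : ℝ) + 1)⁻¹ :=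
      lt_add_of_pos_right _ (by positivity)
    have hzero := key _ hk
    rw [ae_iff]
    simpa only [not_le] using hzero
  filter_upwards [hcnt] with y hy
  have htend : Tendsto (fun k : ℕ => ENNReal.ofReal ((∫ z, h z ∂μ) + ((k : ℝ) + 1)⁻¹)) atTop
      (𝓝 (ENNReal.ofReal (∫ z, h z ∂μ))) := by
    have h1 : Tendsto (fun k : ℕ => ((k : ℝ) + 1)⁻¹) atTop (𝓝 0) := by
      simpa only [one_div] using tendsto_one_div_add_atTop_nhds_zero_nat (𝕜 := ℝ)
    have h2 : Tendsto (fun k : ℕ => (∫ z, h z ∂μ) + ((k : ℝ) + 1)⁻¹) atTop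
        (𝓝 ((∫ z, h z ∂μ) + 0)) := tendsto_const_nhds.add h1
    rw [add_zero] at h2
    exact (ENNReal.continuous_ofReal.tendsto _).comp h2
  exact ge_of_tendsto htend (Eventually.of_forall hy)

end SpaCbAux

open SpaCbAux in
/-- **Compositions of ergodic Koopman operators with contractive multiplication operators are
spaCb with constant `1`.** Let `(X,𝓑,μ,φ)` be an ergodic probability measure preserving
system, `f : X → ℂ` measurable with `|f| ≤ 1` a.e., and let `T` be the operator on `L¹(X,μ)`
given by `(Tg)(x) = f(x)·g(φx)` a.e. Then for every `g ∈ L¹(X,μ)`, for a.e. `x ∈ X`,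
`limsup_N (1/N) ∑_{n=1}^N |(Tⁿg)(x)| ≤ ∫_X |g| dμ`, and for every `g ∈ L¹ ∩ L^∞`,
`sup_n ‖Tⁿg‖_∞ ≤ ‖g‖_∞`. -/
theorem mul_comp_koopman_spaCb
    {X : Type*} [MeasurableSpace X] (μ : Measure X) [IsProbabilityMeasure μ]
    (φ : X → X) (hφ : Ergodic φ μ)
    (f : X → ℂ) (hf : Measurable f) (hf1 : ∀ᵐ x ∂μ, ‖f x‖ ≤ 1)
    (T : Lp ℂ 1 μ →L[ℂ] Lp ℂ 1 μ)
    (hT : ∀ g : Lp ℂ 1 μ, (⇑(T g) : X → ℂ) =ᵐ[μ] fun x => f x * g (φ x)) :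
    (∀ g : Lp ℂ 1 μ, ∀ᵐ x ∂μ,
      Filter.limsup (fun N : ℕ =>
          ENNReal.ofReal ((N : ℝ)⁻¹ * ∑ n ∈ Finset.Icc 1 N, ‖((T ^ n) g) x‖)) atTop
        ≤ ENNReal.ofReal (∫ y, ‖g y‖ ∂μ)) ∧
    (∀ g : Lp ℂ 1 μ, eLpNorm (⇑g) ⊤ μ ≠ ⊤ → ∀ n : ℕ,
      eLpNorm (⇑((T ^ n) g)) ⊤ μ ≤ eLpNorm (⇑g) ⊤ μ) := by
  -- a.e. pointwise domination of `(Tⁿg)` by `g ∘ φⁿ`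
  have hA : ∀ g : Lp ℂ 1 μ, ∀ n : ℕ, ∀ᵐ x ∂μ, ‖((T ^ n) g) x‖ ≤ ‖g (φ^[n] x)‖ := by
    intro g n
    induction n with
    | zero =>
        simp only [pow_zero, ContinuousLinearMap.one_apply, Function.iterate_zero_apply]
        exact Filter.Eventually.of_forall fun x => le_rfl
    | succ n ih =>
        have hplug : (⇑((T ^ (n + 1)) g) : X → ℂ) =ᵐ[μ]
            fun x => f x * ((T ^ n) g) (φ x) := by
          have hpow : (T ^ (n + 1)) g = T ((T ^ n) g) := by
            rw [pow_succ']; rfl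
          rw [hpow]
          exact hT ((T ^ n) g)
        have hih : ∀ᵐ x ∂μ, ‖((T ^ n) g) (φ x)‖ ≤ ‖g (φ^[n] (φ x))‖ :=
          hφ.toMeasurePreserving.quasiMeasurePreserving.ae ih
        filter_upwards [hplug, hih, hf1] with x h1 h2 h3
        calc ‖((T ^ (n + 1)) g) x‖ = ‖f x * ((T ^ n) g) (φ x)‖ := by rw [h1]
          _ = ‖f x‖ * ‖((T ^ n) g) (φ x)‖ := norm_mul _ _
          _ ≤ 1 * ‖g (φ^[n] (φ x))‖ :=
              mul_le_mul h3 h2 (norm_nonneg _) zero_le_one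
          _ = ‖g (φ^[n + 1] x)‖ := by rw [one_mul, Function.iterate_succ_apply]
  constructor
  · intro g
    set h₀ : X → ℝ := fun x => ‖g x‖ with hh₀
    have hgm : StronglyMeasurable (⇑g) := Lp.stronglyMeasurable g
    have hm : Measurable h₀ := hgm.measurable.norm
    have hi : Integrable h₀ μ := (L1.integrable_coeFn g).norm
    have h0 : ∀ x, 0 ≤ h₀ x := fun x => norm_nonneg _
    have hAall : ∀ᵐ x ∂μ, ∀ n : ℕ, ‖((T ^ n) g) x‖ ≤ ‖g (φ^[n] x)‖ :=
      ae_all_iff.mpr (hA g)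
    have hbound := birkhoff_limsup_le hφ hm hi h0
    have hboundφ : ∀ᵐ x ∂μ,
        Filter.limsup (fun N : ℕ => ENNReal.ofReal ((N : ℝ)⁻¹ * bS φ h₀ N (φ x))) atTop
          ≤ ENNReal.ofReal (∫ z, h₀ z ∂μ) :=
      hφ.toMeasurePreserving.quasiMeasurePreserving.ae hbound
    filter_upwards [hAall, hboundφ] with x hx hxb
    have hsum : ∀ N : ℕ, ∑ n ∈ Finset.Icc 1 N, ‖g (φ^[n] x)‖ = bS φ h₀ N (φ x) := by
      intro N
      rw [bS_eq, ← Finset.Ico_add_one_right_eq_Icc, Finset.sum_Ico_eq_sum_range]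
      refine Finset.sum_congr rfl fun i _ => ?_
      rw [add_comm 1 i, Function.iterate_add_apply, Function.iterate_one]
    refine le_trans (limsup_le_limsup (Filter.Eventually.of_forall fun N => ?_)) hxb
    apply ENNReal.ofReal_le_ofReal
    rw [← hsum N]
    exact mul_le_mul_of_nonneg_left (Finset.sum_le_sum fun n _ => hx n)
      (inv_nonneg.mpr (Nat.cast_nonneg N))
  · intro g _ n
    have hb : ∀ᵐ x ∂μ, ‖((T ^ n) g) x‖ ≤ ‖(⇑g ∘ φ^[n]) x‖ :=
      (hA g n).mono fun x hx => by simpa [Function.comp] using hx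
    calc eLpNorm (⇑((T ^ n) g)) ⊤ μ ≤ eLpNorm (⇑g ∘ φ^[n]) ⊤ μ := eLpNorm_mono_ae hb
      _ = eLpNorm (⇑g) ⊤ μ :=
          eLpNorm_comp_measurePreserving (Lp.aestronglyMeasurable g)
            (hφ.toMeasurePreserving.iterate n)
end
end

section
/- Let α ∈ ℝ \ ℚ, let m be Lebesgue measure on [0,1], and let U_α : L¹([0,1],m) → L¹([0,1],m) be given by (U_αf)(x) = e^{2πix}·f(x + α mod 1). Then U_α is strongly mixing: for every f ∈ L¹([0,1],m) and every h ∈ L^∞([0,1],m), lim_{n→∞} ∫₀¹ (U_αⁿf)(x)·conj(h(x)) dm(x) = 0. -/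
open MeasureTheory Filter Topology

noncomputable section

namespace SkewMixAux

open Set Complex

instance : Fact ((0:ℝ) < 1) := ⟨one_pos⟩

local notation "μ01" => (volume.restrict (Set.Ioc (0:ℝ) 1) : Measure ℝ)

/-- The character `t ↦ e^{2πit}`. -/
def ee (t : ℝ) : ℂ := Complex.exp (2 * (Real.pi : ℂ) * Complex.I * (t : ℂ))

lemma ee_norm (t : ℝ) : ‖ee t‖ = 1 := by
  rw [ee, Complex.norm_exp]
  have : (2 * (Real.pi : ℂ) * Complex.I * (t : ℂ)).re = 0 := by simp [Complex.mul_re]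
  rw [this, Real.exp_zero]

lemma ee_add (s t : ℝ) : ee (s + t) = ee s * ee t := by
  rw [ee, ee, ee, ← Complex.exp_add]
  congr 1
  push_cast
  ring

lemma ee_int (k : ℤ) : ee (k : ℝ) = 1 := by
  rw [ee, ← Complex.exp_int_mul_two_pi_mul_I k]
  congr 1
  push_cast
  ring

lemma ee_int_mul_fract (k : ℤ) (y : ℝ) : ee (k * Int.fract y) = ee (k * y) := by
  have h : (k : ℝ) * y = k * Int.fract y + ((k * ⌊y⌋ : ℤ) : ℝ) := by
    push_cast
    rw [Int.fract]
    ring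
  rw [h, ee_add, ee_int, mul_one]

lemma continuous_ee_mul (w : ℝ) : Continuous fun x : ℝ => ee (w * x) :=
  Complex.continuous_exp.comp <| continuous_const.mul
    (Complex.continuous_ofReal.comp (continuous_const.mul continuous_id))

lemma mp_mk : MeasurePreserving ((↑) : ℝ → AddCircle (1:ℝ)) μ01 volume := by
  simpa using AddCircle.measurePreserving_mk 1 0

lemma measurable_circCoe :
    Measurable (fun z : AddCircle (1:ℝ) => ((AddCircle.equivIco 1 0 z : ℝ))) :=
  measurable_subtype_coe.comp (AddCircle.measurableEquivIco 1 0).measurable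

lemma mp_proj :
    MeasurePreserving (fun z : AddCircle (1:ℝ) => ((AddCircle.equivIco 1 0 z : ℝ)))
      volume μ01 := by
  refine ⟨measurable_circCoe, ?_⟩
  rw [← mp_mk.map_eq, Measure.map_map measurable_circCoe AddCircle.measurable_mk']
  have h3 : ∀ᵐ x : ℝ ∂μ01, x ≠ 1 := by
    apply ae_restrict_of_ae
    rw [ae_iff]
    have : {x : ℝ | ¬ x ≠ 1} = {1} := by ext x; simp
    rw [this]
    exact measure_singleton 1
  have h1 : ((fun z : AddCircle (1:ℝ) => ((AddCircle.equivIco 1 0 z : ℝ)))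
      ∘ ((↑) : ℝ → AddCircle (1:ℝ))) =ᵐ[μ01] id := by
    filter_upwards [ae_restrict_mem measurableSet_Ioc, h3] with x hx hx1
    simp only [Function.comp_apply, id_eq, AddCircle.coe_equivIco_mk_apply, div_one, mul_one]
    exact Int.fract_eq_self.mpr ⟨hx.1.le, lt_of_le_of_ne hx.2 hx1⟩
  rw [Measure.map_congr h1, Measure.map_id]

lemma mp_torus (c : ℝ) :
    MeasurePreserving (fun x : ℝ => Int.fract (x + c)) μ01 μ01 := by
  have h1 : MeasurePreserving (fun x : ℝ => ((x + c : ℝ) : AddCircle (1:ℝ))) μ01 volume := by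
    have := (measurePreserving_add_right (volume : Measure (AddCircle (1:ℝ)))
      ((c : ℝ) : AddCircle (1:ℝ))).comp mp_mk
    convert this using 1
    funext x
    simp
  have h2 := mp_proj.comp h1
  convert h2 using 1
  funext x
  simp only [Function.comp_apply, AddCircle.coe_equivIco_mk_apply, div_one, mul_one]

lemma integral_comp_torus (g : ℝ → ℝ) (hg : AEStronglyMeasurable g μ01) (c : ℝ) :
    ∫ x in Set.Ioc (0:ℝ) 1, g (Int.fract (x + c)) = ∫ x in Set.Ioc (0:ℝ) 1, g x := by
  have h1 : ∫ x in Set.Ioc (0:ℝ) 1, g (Int.fract (x + c))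
      = ∫ y, g y ∂(Measure.map (fun x => Int.fract (x + c)) μ01) :=
    (integral_map (mp_torus c).measurable.aemeasurable
      (by rw [(mp_torus c).map_eq]; exact hg)).symm
  rw [h1, (mp_torus c).map_eq]

lemma integrable_comp_torus {g : ℝ → ℂ} (hg : Integrable g μ01) (c : ℝ) :
    Integrable (fun x => g (Int.fract (x + c))) μ01 :=
  ((mp_torus c).integrable_comp hg.aestronglyMeasurable).mpr hg


lemma RL (g : ℝ → ℂ) (k : ℤ) :
    Tendsto (fun n : ℕ => ∫ x in Set.Ioc (0:ℝ) 1, ee (((n:ℝ) + (k:ℝ)) * x) * g x)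
      atTop (𝓝 0) := by
  set H : ℝ → ℂ := (Set.Ioc (0:ℝ) 1).indicator g with hH
  have key : ∀ w : ℝ, ∫ x in Set.Ioc (0:ℝ) 1, ee (w * x) * g x
      = FourierTransform.fourier H (-w) := by
    intro w
    rw [Real.fourier_real_eq_integral_exp_smul, ← integral_indicator measurableSet_Ioc]
    congr 1
    funext x
    by_cases hx : x ∈ Set.Ioc (0:ℝ) 1
    · rw [Set.indicator_of_mem hx, hH, Set.indicator_of_mem hx, smul_eq_mul]
      congr 1
      rw [ee]
      congr 1
      push_cast
      ring
    · rw [Set.indicator_of_notMem hx, hH, Set.indicator_of_notMem hx, smul_zero]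
  have hb : Tendsto (fun n : ℕ => -(((n:ℝ) + (k:ℝ)))) atTop (Filter.cocompact ℝ) := by
    have h1 : Tendsto (fun n : ℕ => ((n:ℝ) + (k:ℝ))) atTop atTop :=
      tendsto_atTop_add_const_right _ _ tendsto_natCast_atTop_atTop
    have h2 : Tendsto (fun n : ℕ => -(((n:ℝ) + (k:ℝ)))) atTop atBot := by
      exact (tendsto_neg_atTop_atBot.comp h1 : _)
    exact h2.mono_right (by rw [cocompact_eq_atBot_atTop]; exact le_sup_left)
  have := (Real.zero_at_infty_fourier H).comp hb
  apply this.congr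
  intro n
  exact (key _).symm

lemma exists_trig (f : ℝ → ℂ) (hf : Integrable f μ01) {δ : ℝ} (hδ : 0 < δ) :
    ∃ (s : Finset ℤ) (coef : ℤ → ℂ),
      ∫ x in Set.Ioc (0:ℝ) 1, ‖f x - ∑ k ∈ s, coef k * ee ((k:ℝ) * x)‖ < δ := by
  classical
  set f' : ℝ → ℂ := hf.1.mk f with hf'def
  have hf'sm : StronglyMeasurable f' := hf.1.stronglyMeasurable_mk
  have hff' : f =ᵐ[μ01] f' := hf.1.ae_eq_mk
  set F : AddCircle (1:ℝ) → ℂ := AddCircle.liftIoc 1 0 f' with hFdef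
  have hFapp : ∀ x ∈ Set.Ioc (0:ℝ) 1, F ((x : ℝ) : AddCircle (1:ℝ)) = f' x := by
    intro x hx
    exact AddCircle.liftIoc_coe_apply (by simpa using hx)
  have hFsm : StronglyMeasurable F := by
    have : Measurable (fun z : AddCircle (1:ℝ) => ((AddCircle.equivIoc 1 0 z : ℝ))) :=
      measurable_subtype_coe.comp (AddCircle.measurableEquivIoc 1 0).measurable
    exact hf'sm.comp_measurable this
  have hFcomp : (F ∘ ((↑) : ℝ → AddCircle (1:ℝ))) =ᵐ[μ01] f' := by
    filter_upwards [ae_restrict_mem measurableSet_Ioc] with x hx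
    exact hFapp x hx
  have hFint : Integrable F (volume : Measure (AddCircle (1:ℝ))) := by
    refine (mp_mk.integrable_comp hFsm.aestronglyMeasurable).mp ?_
    exact ((hf.congr hff').congr hFcomp.symm)
  obtain ⟨G, hGsupp, hG1, hGcont, hGint⟩ :=
    hFint.exists_hasCompactSupport_integral_sub_le (by positivity : (0:ℝ) < δ/3)
  set Gc : C(AddCircle (1:ℝ), ℂ) := ⟨G, hGcont⟩ with hGcdef
  have hGmem : Gc ∈ (Submodule.span ℂ (Set.range (@fourier 1))).topologicalClosure := by
    rw [span_fourier_closure_eq_top]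
    trivial
  rw [← SetLike.mem_coe, Submodule.topologicalClosure_coe] at hGmem
  obtain ⟨Q, hQspan, hQclose⟩ := Metric.mem_closure_iff.mp hGmem (δ/3) (by positivity)
  obtain ⟨c, hc⟩ := Finsupp.mem_span_range_iff_exists_finsupp.mp hQspan
  refine ⟨c.support, fun k => c k, ?_⟩
  set p : ℝ → ℂ := fun x => ∑ k ∈ c.support, c k * ee ((k:ℝ) * x) with hpdef
  have hQx : ∀ x : ℝ, Q ((x : ℝ) : AddCircle (1:ℝ)) = p x := by
    intro x
    rw [← hc]
    rw [Finsupp.sum]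
    rw [ContinuousMap.coe_sum, Finset.sum_apply]
    refine Finset.sum_congr rfl fun k _ => ?_
    rw [ContinuousMap.coe_smul, Pi.smul_apply, smul_eq_mul, fourier_coe_apply]
    congr 1
    rw [ee]
    congr 1
    push_cast
    ring
  have step1 : ∫ x in Set.Ioc (0:ℝ) 1, ‖f x - p x‖
      = ∫ z : AddCircle (1:ℝ), ‖F z - Q z‖ := by
    have e1 : ∫ x in Set.Ioc (0:ℝ) 1, ‖f x - p x‖
        = ∫ x in Set.Ioc (0:ℝ) 1, ‖F ((x:ℝ) : AddCircle (1:ℝ)) - Q ((x:ℝ) : AddCircle (1:ℝ))‖ := by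
      refine integral_congr_ae ?_
      filter_upwards [hff', ae_restrict_mem measurableSet_Ioc] with x hx1 hx2
      rw [hFapp x hx2, hQx x, hx1]
    rw [e1]
    have := AddCircle.integral_preimage (1:ℝ) 0 (fun z => ‖F z - Q z‖)
    rw [zero_add] at this
    exact this
  have hQint : Integrable (fun z => Q z) (volume : Measure (AddCircle (1:ℝ))) :=
    Q.continuous.integrable_of_hasCompactSupport
      (HasCompactSupport.of_compactSpace _)
  have hsubFG : Integrable (fun z => ‖F z - G z‖) (volume : Measure (AddCircle (1:ℝ))) := by
    simpa [Pi.sub_apply] using (hFint.sub hGint).norm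
  have hsubGQ : Integrable (fun z => ‖G z - Q z‖) (volume : Measure (AddCircle (1:ℝ))) := by
    simpa [Pi.sub_apply] using (hGint.sub hQint).norm
  have hsubFQ : Integrable (fun z => ‖F z - Q z‖) (volume : Measure (AddCircle (1:ℝ))) := by
    simpa [Pi.sub_apply] using (hFint.sub hQint).norm
  have step2 : ∫ z : AddCircle (1:ℝ), ‖F z - Q z‖
      ≤ (∫ z : AddCircle (1:ℝ), ‖F z - G z‖) + ∫ z : AddCircle (1:ℝ), ‖G z - Q z‖ := by
    rw [← integral_add hsubFG hsubGQ]
    refine integral_mono hsubFQ (hsubFG.add hsubGQ) fun z => ?_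
    simpa using norm_sub_le_norm_sub_add_norm_sub (F z) (G z) (Q z)
  have step3 : ∫ z : AddCircle (1:ℝ), ‖G z - Q z‖ ≤ δ/3 := by
    have hb : ∀ z : AddCircle (1:ℝ), ‖G z - Q z‖ ≤ ‖Gc - Q‖ := fun z => by
      exact ContinuousMap.norm_coe_le_norm (Gc - Q) z
    calc ∫ z : AddCircle (1:ℝ), ‖G z - Q z‖
        ≤ ∫ _z : AddCircle (1:ℝ), ‖Gc - Q‖ :=
          integral_mono hsubGQ (integrable_const _) hb
      _ = ‖Gc - Q‖ * (volume (Set.univ : Set (AddCircle (1:ℝ)))).toReal := by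
          rw [integral_const, smul_eq_mul, mul_comm]
          rfl
      _ ≤ δ/3 := by
          rw [AddCircle.measure_univ]
          simp only [ENNReal.ofReal_one, ENNReal.toReal_one, mul_one]
          have : ‖Gc - Q‖ = dist Gc Q := by rw [dist_eq_norm]
          rw [this]
          exact hQclose.le
  calc ∫ x in Set.Ioc (0:ℝ) 1, ‖f x - p x‖
      = ∫ z : AddCircle (1:ℝ), ‖F z - Q z‖ := step1
    _ ≤ (∫ z : AddCircle (1:ℝ), ‖F z - G z‖) + ∫ z : AddCircle (1:ℝ), ‖G z - Q z‖ := step2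
    _ ≤ δ/3 + δ/3 := add_le_add hG1 step3
    _ < δ := by linarith



lemma aesm_conj {h : ℝ → ℂ} (hm : AEStronglyMeasurable h μ01) :
    AEStronglyMeasurable (fun x => (starRingEnd ℂ) (h x)) μ01 :=
  Complex.continuous_conj.comp_aestronglyMeasurable hm

lemma integrable_conj_h {h : ℝ → ℂ} (hm : AEStronglyMeasurable h μ01) {C : ℝ}
    (hC : ∀ᵐ x ∂μ01, ‖h x‖ ≤ C) :
    Integrable (fun x => (starRingEnd ℂ) (h x)) μ01 := by
  refine Integrable.mono' (integrable_const C) (aesm_conj hm) ?_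
  filter_upwards [hC] with x hx
  simpa [RCLike.norm_conj] using hx

lemma integrable_term {h : ℝ → ℂ} (hm : AEStronglyMeasurable h μ01) {C : ℝ}
    (hC : ∀ᵐ x ∂μ01, ‖h x‖ ≤ C)
    (g : ℝ → ℂ) (hg : Integrable g μ01) (w c : ℝ) :
    Integrable (fun x => ee (w * x) * g (Int.fract (x + c)) * (starRingEnd ℂ) (h x)) μ01 := by
  have hgφ := integrable_comp_torus hg c
  have h1 : Integrable
      (fun x => (ee (w * x) * (starRingEnd ℂ) (h x)) * g (Int.fract (x + c))) μ01 := by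
    refine hgφ.bdd_mul (c := C)
      (((continuous_ee_mul w).aestronglyMeasurable).mul (aesm_conj hm)) ?_
    filter_upwards [hC] with x hx
    rw [norm_mul, ee_norm, one_mul, RCLike.norm_conj]
    exact hx
  exact h1.congr (Filter.Eventually.of_forall fun x => by ring)


end SkewMixAux


/-- **The skew operator `U_α` is strongly mixing.** Let `α` be irrational, `m` Lebesgue
measure on `[0,1]`, and `U_α` the operator on `L¹([0,1],m)` given by
`(U_αf)(x) = e^{2πix}·f(x + α mod 1)`, so that
`(U_αⁿf)(x) = e^{2πi(nx + n(n-1)α/2)}·f(x + nα mod 1)`. Then for every `f ∈ L¹([0,1],m)` and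
every `h ∈ L^∞([0,1],m)`, `∫₀¹ (U_αⁿf)(x)·conj(h(x)) dm(x) → 0` as `n → ∞`. -/
theorem skew_operator_strongly_mixing
    (α : ℝ) (hα : Irrational α)
    (f : ℝ → ℂ) (hf : Integrable f (volume.restrict (Set.Icc (0:ℝ) 1)))
    (h : ℝ → ℂ) (hmeas : AEStronglyMeasurable h (volume.restrict (Set.Icc (0:ℝ) 1)))
    (hbdd : ∃ C : ℝ, ∀ᵐ x ∂(volume.restrict (Set.Icc (0:ℝ) 1)), ‖h x‖ ≤ C) :
    Tendsto (fun n : ℕ =>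
        ∫ x in Set.Icc (0:ℝ) 1,
          Complex.exp (2 * (Real.pi : ℂ) * Complex.I *
              (((n : ℝ) * x + (n : ℝ) * ((n : ℝ) - 1) * α / 2 : ℝ) : ℂ)) *
            f (Int.fract (x + (n : ℝ) * α)) * (starRingEnd ℂ) (h x))
      atTop (𝓝 0) := by
  classical
  open SkewMixAux in
  have hrw : (volume.restrict (Set.Icc (0:ℝ) 1)) = volume.restrict (Set.Ioc (0:ℝ) 1) :=
    (MeasureTheory.restrict_Ioc_eq_restrict_Icc).symm
  rw [hrw] at hf hmeas hbdd
  simp only [MeasureTheory.integral_Icc_eq_integral_Ioc]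
  obtain ⟨C₀, hC₀⟩ := hbdd
  set C : ℝ := max C₀ 0 + 1 with hCdef
  have hCpos : 0 < C := by positivity
  have hC : ∀ᵐ x ∂(volume.restrict (Set.Ioc (0:ℝ) 1)), ‖h x‖ ≤ C := by
    filter_upwards [hC₀] with x hx
    have := le_max_left C₀ 0
    simp only [hCdef]
    linarith
  -- the main reduction: oscillatory integrals without the constant phase tend to zero
  have hJ : Tendsto (fun n : ℕ => ∫ x in Set.Ioc (0:ℝ) 1,
      ee ((n:ℝ) * x) * f (Int.fract (x + (n:ℝ) * α)) * (starRingEnd ℂ) (h x))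
      atTop (𝓝 0) := by
    rw [NormedAddCommGroup.tendsto_nhds_zero]
    intro ε hε
    obtain ⟨s, coef, hp⟩ := exists_trig f hf (δ := ε / (2 * C)) (by positivity)
    set p : ℝ → ℂ := fun x => ∑ k ∈ s, coef k * ee ((k:ℝ) * x) with hpdef
    have hpcont : Continuous p :=
      continuous_finset_sum _ fun k _ => continuous_const.mul (continuous_ee_mul _)
    have hpint : Integrable p (volume.restrict (Set.Ioc (0:ℝ) 1)) :=
      hpcont.integrableOn_Ioc
    have hconj := integrable_conj_h hmeas hC
    -- the trigonometric polynomial part tends to zero (Riemann-Lebesgue)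
    have hJp : Tendsto (fun n : ℕ => ∫ x in Set.Ioc (0:ℝ) 1,
        ee ((n:ℝ) * x) * p (Int.fract (x + (n:ℝ) * α)) * (starRingEnd ℂ) (h x))
        atTop (𝓝 0) := by
      have heq : ∀ n : ℕ, ∫ x in Set.Ioc (0:ℝ) 1,
          ee ((n:ℝ) * x) * p (Int.fract (x + (n:ℝ) * α)) * (starRingEnd ℂ) (h x)
          = ∑ k ∈ s, (coef k * ee ((k:ℝ) * ((n:ℝ) * α)))
              * ∫ x in Set.Ioc (0:ℝ) 1, ee (((n:ℝ) + (k:ℝ)) * x) * (starRingEnd ℂ) (h x) := by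
        intro n
        have hterm : ∀ k ∈ s, Integrable (fun x =>
            (coef k * ee ((k:ℝ) * ((n:ℝ) * α)))
              * (ee (((n:ℝ) + (k:ℝ)) * x) * (starRingEnd ℂ) (h x)))
            (volume.restrict (Set.Ioc (0:ℝ) 1)) := by
          intro k _
          refine Integrable.const_mul ?_ _
          refine hconj.bdd_mul (c := 1)
            ((continuous_ee_mul ((n:ℝ) + (k:ℝ))).aestronglyMeasurable) ?_
          exact Filter.Eventually.of_forall fun x => le_of_eq (ee_norm _)
        have hfun : (fun x => ee ((n:ℝ) * x) * p (Int.fract (x + (n:ℝ) * α))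
              * (starRingEnd ℂ) (h x))
            = fun x => ∑ k ∈ s, (coef k * ee ((k:ℝ) * ((n:ℝ) * α)))
              * (ee (((n:ℝ) + (k:ℝ)) * x) * (starRingEnd ℂ) (h x)) := by
          funext x
          simp only [hpdef]
          rw [Finset.mul_sum, Finset.sum_mul]
          refine Finset.sum_congr rfl fun k _ => ?_
          have hk : ee ((k:ℝ) * Int.fract (x + (n:ℝ) * α))
              = ee ((k:ℝ) * x) * ee ((k:ℝ) * ((n:ℝ) * α)) := by
            rw [ee_int_mul_fract,
              show (k:ℝ) * (x + (n:ℝ) * α) = (k:ℝ) * x + (k:ℝ) * ((n:ℝ) * α) by ring, ee_add]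
          have hk2 : ee (((n:ℝ) + (k:ℝ)) * x) = ee ((n:ℝ) * x) * ee ((k:ℝ) * x) := by
            rw [show ((n:ℝ) + (k:ℝ)) * x = (n:ℝ) * x + (k:ℝ) * x by ring, ee_add]
          rw [hk, hk2]
          ring
        rw [hfun, integral_finset_sum s hterm]
        refine Finset.sum_congr rfl fun k _ => ?_
        exact integral_const_mul _ _
      have hsum : Tendsto (fun n : ℕ => ∑ k ∈ s, (coef k * ee ((k:ℝ) * ((n:ℝ) * α)))
          * ∫ x in Set.Ioc (0:ℝ) 1, ee (((n:ℝ) + (k:ℝ)) * x) * (starRingEnd ℂ) (h x))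
          atTop (𝓝 0) := by
        have : Tendsto (fun n : ℕ => ∑ k ∈ s, (coef k * ee ((k:ℝ) * ((n:ℝ) * α)))
            * ∫ x in Set.Ioc (0:ℝ) 1, ee (((n:ℝ) + (k:ℝ)) * x) * (starRingEnd ℂ) (h x))
            atTop (𝓝 (∑ k ∈ s, 0)) := by
          refine tendsto_finset_sum s fun k _ => ?_
          have hR := RL (fun x => (starRingEnd ℂ) (h x)) k
          rw [tendsto_zero_iff_norm_tendsto_zero]
          have hnorm : (fun n : ℕ => ‖(coef k * ee ((k:ℝ) * ((n:ℝ) * α)))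
              * ∫ x in Set.Ioc (0:ℝ) 1, ee (((n:ℝ) + (k:ℝ)) * x) * (starRingEnd ℂ) (h x)‖)
              = fun n : ℕ => ‖coef k‖ *
                ‖∫ x in Set.Ioc (0:ℝ) 1, ee (((n:ℝ) + (k:ℝ)) * x) * (starRingEnd ℂ) (h x)‖ := by
            funext n
            rw [norm_mul, norm_mul, ee_norm, mul_one]
          rw [hnorm]
          have := (tendsto_zero_iff_norm_tendsto_zero.mp hR).const_mul ‖coef k‖
          simpa using this
        simpa using this
      exact hsum.congr fun n => (heq n).symm
    -- the approximation bound
    have hdiff : ∀ n : ℕ,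
        ‖(∫ x in Set.Ioc (0:ℝ) 1,
            ee ((n:ℝ) * x) * f (Int.fract (x + (n:ℝ) * α)) * (starRingEnd ℂ) (h x))
          - ∫ x in Set.Ioc (0:ℝ) 1,
            ee ((n:ℝ) * x) * p (Int.fract (x + (n:ℝ) * α)) * (starRingEnd ℂ) (h x)‖
          ≤ C * ∫ x in Set.Ioc (0:ℝ) 1, ‖f x - p x‖ := by
      intro n
      have hd : Integrable (fun y => f y - p y) (volume.restrict (Set.Ioc (0:ℝ) 1)) :=
        hf.sub hpint
      have hIf := integrable_term hmeas hC f hf ((n:ℝ)) ((n:ℝ) * α)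
      have hIp := integrable_term hmeas hC p hpint ((n:ℝ)) ((n:ℝ) * α)
      have hId := integrable_term hmeas hC (fun y => f y - p y) hd ((n:ℝ)) ((n:ℝ) * α)
      rw [← integral_sub hIf hIp]
      have hfun : (fun x => ee ((n:ℝ) * x) * f (Int.fract (x + (n:ℝ) * α))
            * (starRingEnd ℂ) (h x)
          - ee ((n:ℝ) * x) * p (Int.fract (x + (n:ℝ) * α)) * (starRingEnd ℂ) (h x))
          = fun x => ee ((n:ℝ) * x) * ((fun y => f y - p y) (Int.fract (x + (n:ℝ) * α)))
            * (starRingEnd ℂ) (h x) := by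
        funext x
        simp only []
        ring
      rw [hfun]
      have hφnorm : Integrable (fun x => ‖(fun y => f y - p y) (Int.fract (x + (n:ℝ) * α))‖)
          (volume.restrict (Set.Ioc (0:ℝ) 1)) := by
        have := integrable_comp_torus hd ((n:ℝ) * α)
        exact this.norm
      calc ‖∫ x in Set.Ioc (0:ℝ) 1, ee ((n:ℝ) * x)
              * ((fun y => f y - p y) (Int.fract (x + (n:ℝ) * α))) * (starRingEnd ℂ) (h x)‖
          ≤ ∫ x in Set.Ioc (0:ℝ) 1, ‖ee ((n:ℝ) * x)
              * ((fun y => f y - p y) (Int.fract (x + (n:ℝ) * α))) * (starRingEnd ℂ) (h x)‖ :=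
            norm_integral_le_integral_norm _
        _ ≤ ∫ x in Set.Ioc (0:ℝ) 1,
              C * ‖(fun y => f y - p y) (Int.fract (x + (n:ℝ) * α))‖ := by
            refine integral_mono_ae hId.norm (hφnorm.const_mul C) ?_
            filter_upwards [hC] with x hx
            rw [norm_mul, norm_mul, ee_norm, one_mul, RCLike.norm_conj]
            calc ‖(fun y => f y - p y) (Int.fract (x + (n:ℝ) * α))‖ * ‖h x‖
                ≤ ‖(fun y => f y - p y) (Int.fract (x + (n:ℝ) * α))‖ * C :=
                  mul_le_mul_of_nonneg_left hx (norm_nonneg _)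
              _ = C * ‖(fun y => f y - p y) (Int.fract (x + (n:ℝ) * α))‖ := mul_comm _ _
        _ = C * ∫ x in Set.Ioc (0:ℝ) 1,
              ‖(fun y => f y - p y) (Int.fract (x + (n:ℝ) * α))‖ := by
            rw [integral_const_mul]
        _ = C * ∫ x in Set.Ioc (0:ℝ) 1, ‖f x - p x‖ := by
            rw [integral_comp_torus (fun y => ‖f y - p y‖)
              hd.norm.aestronglyMeasurable ((n:ℝ) * α)]
    have hbound : C * ∫ x in Set.Ioc (0:ℝ) 1, ‖f x - p x‖ < ε / 2 := by
      have h1 : C * ∫ x in Set.Ioc (0:ℝ) 1, ‖f x - p x‖ < C * (ε / (2 * C)) :=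
        mul_lt_mul_of_pos_left hp hCpos
      have h2 : C * (ε / (2 * C)) = ε / 2 := by
        field_simp
      linarith
    have hev := NormedAddCommGroup.tendsto_nhds_zero.mp hJp (ε / 2) (half_pos hε)
    filter_upwards [hev] with n hn
    have key := hdiff n
    have : ‖∫ x in Set.Ioc (0:ℝ) 1,
        ee ((n:ℝ) * x) * f (Int.fract (x + (n:ℝ) * α)) * (starRingEnd ℂ) (h x)‖
        ≤ ‖∫ x in Set.Ioc (0:ℝ) 1,
            ee ((n:ℝ) * x) * p (Int.fract (x + (n:ℝ) * α)) * (starRingEnd ℂ) (h x)‖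
          + C * ∫ x in Set.Ioc (0:ℝ) 1, ‖f x - p x‖ := by
      refine le_trans ?_ (add_le_add_right key _)
      exact norm_le_insert' _ _
    refine lt_of_le_of_lt this ?_
    rw [← add_halves ε]
    exact add_lt_add hn hbound
  -- pull out the constant phase factor
  have hsplit : (fun n : ℕ => ∫ x in Set.Ioc (0:ℝ) 1,
      Complex.exp (2 * (Real.pi : ℂ) * Complex.I *
          (((n : ℝ) * x + (n : ℝ) * ((n : ℝ) - 1) * α / 2 : ℝ) : ℂ)) *
        f (Int.fract (x + (n : ℝ) * α)) * (starRingEnd ℂ) (h x))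
      = fun n : ℕ => ee ((n:ℝ) * ((n:ℝ) - 1) * α / 2) * ∫ x in Set.Ioc (0:ℝ) 1,
          ee ((n:ℝ) * x) * f (Int.fract (x + (n:ℝ) * α)) * (starRingEnd ℂ) (h x) := by
    funext n
    rw [← integral_const_mul]
    congr 1
    funext x
    show ee ((n : ℝ) * x + (n : ℝ) * ((n : ℝ) - 1) * α / 2) * _ * _ = _
    rw [ee_add]
    ring
  rw [hsplit, tendsto_zero_iff_norm_tendsto_zero]
  have hn : (fun n : ℕ => ‖ee ((n:ℝ) * ((n:ℝ) - 1) * α / 2) * ∫ x in Set.Ioc (0:ℝ) 1,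
      ee ((n:ℝ) * x) * f (Int.fract (x + (n:ℝ) * α)) * (starRingEnd ℂ) (h x)‖)
      = fun n : ℕ => ‖∫ x in Set.Ioc (0:ℝ) 1,
        ee ((n:ℝ) * x) * f (Int.fract (x + (n:ℝ) * α)) * (starRingEnd ℂ) (h x)‖ := by
    funext n
    rw [norm_mul, ee_norm, one_mul]
  rw [hn, ← tendsto_zero_iff_norm_tendsto_zero]
  exact hJ


end
end
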